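/- arXiv:math/0510043 — 6 statements merged into one kernel-verified Lean document; each statement's English description precedes it below -/
import Mathlib

section
/- Let X and (X_n)_{n≥1} be i.i.d. integrable real random variables with E[X]=0, and let G be a moderate function. If for every a > 0 the series S(X,G,a) := Σ_{n≥1} n^{-1}·G(n)·P[|S_n/n| ≥ a] is finite, then for every a > 0 the last deviation time L_a is almost surely finite and G(L_a) is integrable. -/
open MeasureTheory ProbabilityTheory ENNReal

/-- Partial sums `S_n = X_1 + ⋯ + X_n` (here `X i` for `i < n`). -/
noncomputable def partialSum {Ω : Type*} (X : ℕ → Ω → ℝ) (n : ℕ) (ω : Ω) : ℝ :=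
  ∑ i ∈ Finset.range n, X i ω

/-- The last deviation time `L_a = sup({0} ∪ {n ≥ 1 : |S_n/n| ≥ a}) ∈ ℕ ∪ {∞}`. -/
noncomputable def lastDev {Ω : Type*} (X : ℕ → Ω → ℝ) (a : ℝ) (ω : Ω) : ℕ∞ :=
  ⨆ n ∈ {n : ℕ | 1 ≤ n ∧ a ≤ |partialSum X n ω / n|}, (n : ℕ∞)

/-- Evaluation of `G` at an extended natural number, with `G(∞) = ∞`. -/
noncomputable def evalG (G : ℝ → ℝ) : ℕ∞ → ℝ≥0∞
  | ⊤ => ⊤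
  | (n : ℕ) => ENNReal.ofReal (G n)

/-- A positive function on `[0,∞)` is moderate if it is non-decreasing, tends to `+∞`,
and `G(2t) ≤ c·G(t)`. -/
def Moderate (G : ℝ → ℝ) : Prop :=
  (∀ t ≥ 0, 0 < G t) ∧ MonotoneOn G (Set.Ici 0) ∧
    Filter.Tendsto G Filter.atTop Filter.atTop ∧
    ∃ c : ℝ, ∀ t ≥ 0, G (2 * t) ≤ c * G t

/-- The series `S(X,G,a) = Σ_{n ≥ 1} n⁻¹ G(n) P[|S_n/n| ≥ a]`, valued in `ℝ≥0∞`. -/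
noncomputable def devSeries {Ω : Type*} [MeasurableSpace Ω] (μ : Measure Ω)
    (X : ℕ → Ω → ℝ) (G : ℝ → ℝ) (a : ℝ) : ℝ≥0∞ :=
  ∑' n : {n : ℕ // 1 ≤ n}, ((n : ℕ) : ℝ≥0∞)⁻¹ * ENNReal.ofReal (G (n : ℕ)) *
    μ {ω | a ≤ |partialSum X (n : ℕ) ω / (n : ℕ)|}

/-! The strong law gives `S_n / n → 0` almost surely, hence `L_a < ∞` almost surely. If
`2 ^ j ≤ L_a < 2 ^ (j + 1)` then `|S_N / N| ≥ a` for some `N` in that dyadic block, so by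
monotonicity `E G(L_a) ≤ G(0) + Σ_j G(2 ^ (j + 1)) P(D_j)`, where `D_j` is the event that the
block contains such an `N`. A first-entrance (Ottaviani-type) argument bounds `P(D_j)` by
`2 P(|S_k / k| ≥ a / 8)` for every `k` in the next block once `j` is large: after the first
entrance time `N`, the increment `S_k - S_N` is independent of the past and, by the weak law, is
small with probability at least `1 / 2`. Averaging over the `2 ^ (j + 1)` values of `k` turns
`G(2 ^ (j + 1)) P(D_j)` into at most four times the block of `S(X, G, a / 8)`. -/

open Filter Topology Set

lemma Finset.sum_range_sum_Ico_of_monotone {M : Type*} [AddCommMonoid M] {b : ℕ → ℕ}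
    (hb : Monotone b) (f : ℕ → M) (n : ℕ) :
    ∑ j ∈ Finset.range n, ∑ k ∈ Finset.Ico (b j) (b (j + 1)), f k
      = ∑ k ∈ Finset.Ico (b 0) (b n), f k := by
  induction n with
  | zero => simp
  | succ n ih =>
    rw [Finset.sum_range_succ, ih, Finset.sum_Ico_consecutive _ (hb n.zero_le) (hb n.le_succ)]

lemma ENNReal.le_two_mul_sum_Ico_inv_mul {c : ℕ} (hc : 0 < c) {x : ℝ≥0∞} {g : ℕ → ℝ≥0∞}
    (h : ∀ k ∈ Finset.Ico c (2 * c), x ≤ g k) :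
    x ≤ 2 * ∑ k ∈ Finset.Ico c (2 * c), (k : ℝ≥0∞)⁻¹ * g k :=
  calc x = 2 * ∑ _k ∈ Finset.Ico c (2 * c), ((2 * c : ℕ) : ℝ≥0∞)⁻¹ * x := by
        rw [Finset.sum_const, Nat.card_Ico, (by omega : 2 * c - c = c), nsmul_eq_mul,
          ← mul_assoc, ← mul_assoc, Nat.cast_mul, Nat.cast_ofNat,
          ENNReal.mul_inv_cancel (by positivity) (by finiteness), one_mul]
    _ ≤ 2 * ∑ k ∈ Finset.Ico c (2 * c), (k : ℝ≥0∞)⁻¹ * g k := by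
        gcongr with k hk
        · exact_mod_cast (Finset.mem_Ico.1 hk).2.le
        · exact h k hk

lemma le_abs_div_iff_of_pos {x b n : ℝ} (hn : 0 < n) : b ≤ |x / n| ↔ b * n ≤ |x| := by
  rw [abs_div, abs_of_pos hn, le_div_iff₀ hn]

lemma Nat.cast_mem_Icc_of_mem_Ico_two_pow {j N : ℕ} (hN : N ∈ Finset.Ico (2 ^ j) (2 ^ (j + 1))) :
    (N : ℝ) ∈ Icc (2 ^ j) (2 * 2 ^ j) := by
  obtain ⟨h_lo, h_hi⟩ := Finset.mem_Ico.1 hN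
  have h_hi' : (N : ℝ) ≤ ((2 ^ (j + 1) : ℕ) : ℝ) := by exact_mod_cast h_hi.le
  push_cast [pow_succ] at h_hi'
  exact ⟨by exact_mod_cast h_lo, by linarith⟩

lemma MeasurableSet.disjointed_of_le {Ω : Type*} {m : MeasurableSpace Ω} {B : ℕ → Set Ω}
    {n : ℕ} (hB : ∀ M ≤ n, MeasurableSet[m] (B M)) : MeasurableSet[m] (disjointed B n) := by
  rw [disjointed_eq_inter_compl]
  exact (hB n le_rfl).inter
    (MeasurableSet.iInter fun j ↦ MeasurableSet.iInter fun hj ↦ (hB j hj.le).compl)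

lemma MeasureTheory.inv_two_le_prob_compl {Ω : Type*} [MeasurableSpace Ω] {μ : Measure Ω}
    [IsProbabilityMeasure μ] {s : Set Ω} (hs : MeasurableSet s) (h : μ s ≤ 2⁻¹) :
    2⁻¹ ≤ μ sᶜ := by
  rw [prob_compl_eq_one_sub hs, ← ENNReal.one_sub_inv_two]
  exact tsub_le_tsub_left h 1

lemma MeasureTheory.measure_iUnion_le_of_disjointed_le {Ω : Type*} [MeasurableSpace Ω]
    {μ : Measure Ω} {B : ℕ → Set Ω} {D : Set Ω}
    (hB : ∀ n, MeasurableSet (B n)) (hD : MeasurableSet D) {c : ℝ≥0∞}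
    (h : ∀ n, μ (disjointed B n) ≤ c * μ (disjointed B n ∩ D)) :
    μ (⋃ n, B n) ≤ c * μ D :=
  calc μ (⋃ n, B n) = ∑' n, μ (disjointed B n) := by
        rw [← iUnion_disjointed, measure_iUnion (disjoint_disjointed B)
          (MeasurableSet.disjointed hB)]
    _ ≤ ∑' n, c * μ (disjointed B n ∩ D) := ENNReal.tsum_le_tsum h
    _ = c * μ (⋃ n, disjointed B n ∩ D) := by
        rw [ENNReal.tsum_mul_left, measure_iUnion
          ((disjoint_disjointed B).mono fun _ _ h ↦ h.mono inter_subset_left inter_subset_left)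
          fun n ↦ (MeasurableSet.disjointed hB n).inter hD]
    _ ≤ c * μ D := by gcongr; exact iUnion_subset fun _ ↦ inter_subset_right

section PartialSums

variable {Ω : Type*} {Xs : ℕ → Ω → ℝ} {G : ℝ → ℝ} {a : ℝ} {ω : Ω}

lemma measurable_sum_iSup_comap {S : Set ℕ} {t : Finset ℕ} (ht : ↑t ⊆ S) :
    Measurable[⨆ i ∈ S, MeasurableSpace.comap (Xs i) inferInstance]
      (fun ω ↦ ∑ i ∈ t, Xs i ω) :=
  Finset.measurable_sum _ fun i hi ↦
    (comap_measurable (Xs i)).mono (le_iSup₂ (f := fun i _ ↦ MeasurableSpace.comap (Xs i) _)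
      i (ht hi)) le_rfl

lemma measurable_partialSum_iSup_comap_Iio {M n : ℕ} (hMn : M ≤ n) :
    Measurable[⨆ i ∈ Iio n, MeasurableSpace.comap (Xs i) inferInstance] (partialSum Xs M) :=
  measurable_sum_iSup_comap fun i hi ↦ by
    simp only [Finset.coe_range, mem_Iio] at hi ⊢
    omega

lemma lastDev_le_iff {N : ℕ} :
    lastDev Xs a ω ≤ N ↔ ∀ n, 1 ≤ n → a ≤ |partialSum Xs n ω / n| → n ≤ N := by
  simp [lastDev]

lemma le_abs_partialSum_div_of_lastDev_eq {N : ℕ} (h : lastDev Xs a ω = N) (hN : 1 ≤ N) :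
    a ≤ |partialSum Xs N ω / N| := by
  by_contra hN_dev
  have : lastDev Xs a ω ≤ (N - 1 : ℕ) := lastDev_le_iff.2 fun n hn hdev ↦ by
    rcases (lastDev_le_iff.1 h.le n hn hdev).lt_or_eq with hn_lt | rfl
    · omega
    · exact absurd hdev hN_dev
  rw [h, Nat.cast_le] at this
  omega

lemma lastDev_ne_top_of_tendsto (ha : 0 < a)
    (h : Tendsto (fun n : ℕ ↦ partialSum Xs n ω / n) atTop (𝓝 0)) : lastDev Xs a ω ≠ ⊤ := by
  obtain ⟨N, hN⟩ := eventually_atTop.1 (h.eventually (Metric.ball_mem_nhds 0 ha))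
  refine ne_top_of_le_ne_top (ENat.natCast_ne_top N) (lastDev_le_iff.2 fun n _ hdev ↦ ?_)
  by_contra! hNn
  have := hN n hNn.le
  rw [Real.dist_eq, sub_zero] at this
  linarith

def dyadicDev (Xs : ℕ → Ω → ℝ) (a : ℝ) (j : ℕ) : Set Ω :=
  ⋃ N ∈ Finset.Ico (2 ^ j) (2 ^ (j + 1)), {ω | a ≤ |partialSum Xs N ω / N|}

lemma div_sixteen_le_abs_partialSum_div_or {j N k : ℕ}
    (hN : N ∈ Finset.Ico (2 ^ j) (2 ^ (j + 1))) (hk : k ∈ Finset.Ico (2 ^ (j + 1)) (2 ^ (j + 2)))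
    (h : a * 2 ^ j / 2 ≤ |partialSum Xs k ω - partialSum Xs N ω|) :
    a / 16 ≤ |partialSum Xs k ω / k| ∨ a / 16 ≤ |partialSum Xs N ω / N| := by
  obtain ⟨hN_lo, hN_hi⟩ := Nat.cast_mem_Icc_of_mem_Ico_two_pow hN
  obtain ⟨hk_lo, hk_hi⟩ := Nat.cast_mem_Icc_of_mem_Ico_two_pow hk
  rw [pow_succ] at hk_lo hk_hi
  have hT : (0 : ℝ) < 2 ^ j := by positivity
  rw [le_abs_div_iff_of_pos (by linarith), le_abs_div_iff_of_pos (by linarith)]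
  by_contra! hlt
  have ha : 0 < a := by nlinarith [abs_nonneg (partialSum Xs k ω)]
  have := abs_sub (partialSum Xs k ω) (partialSum Xs N ω)
  nlinarith [mul_le_mul_of_nonneg_left hk_hi ha.le, mul_le_mul_of_nonneg_left hN_hi ha.le]

lemma div_eight_le_abs_partialSum_div {j N k : ℕ}
    (hN : N ∈ Finset.Ico (2 ^ j) (2 ^ (j + 1))) (hk : k ∈ Finset.Ico (2 ^ (j + 1)) (2 ^ (j + 2)))
    (hdev : a ≤ |partialSum Xs N ω / N|)
    (hincr : |partialSum Xs k ω - partialSum Xs N ω| < a * 2 ^ j / 2) :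
    a / 8 ≤ |partialSum Xs k ω / k| := by
  obtain ⟨hN_lo, -⟩ := Nat.cast_mem_Icc_of_mem_Ico_two_pow hN
  obtain ⟨hk_lo, hk_hi⟩ := Nat.cast_mem_Icc_of_mem_Ico_two_pow hk
  rw [pow_succ] at hk_lo hk_hi
  have hT : (0 : ℝ) < 2 ^ j := by positivity
  have ha : 0 < a := by nlinarith [abs_nonneg (partialSum Xs k ω - partialSum Xs N ω)]
  rw [le_abs_div_iff_of_pos (by linarith)] at hdev
  rw [le_abs_div_iff_of_pos (by linarith)]
  have := abs_sub_abs_le_abs_sub (partialSum Xs N ω) (partialSum Xs k ω)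
  rw [abs_sub_comm] at hincr
  nlinarith [mul_le_mul_of_nonneg_left hk_hi ha.le, mul_le_mul_of_nonneg_left hN_lo ha.le]

lemma evalG_lastDev_le (hG : MonotoneOn G (Ici 0)) (h : lastDev Xs a ω ≠ ⊤) :
    evalG G (lastDev Xs a ω) ≤ ENNReal.ofReal (G 0) +
      ∑' j, (dyadicDev Xs a j).indicator (fun _ ↦ ENNReal.ofReal (G (2 ^ (j + 1)))) ω := by
  obtain ⟨N, hN⟩ := ENat.ne_top_iff_exists.1 h
  rw [← hN]
  change ENNReal.ofReal (G N) ≤ _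
  rcases N.eq_zero_or_pos with rfl | hN_pos
  · simp
  set j := Nat.log 2 N
  have hN_lt : N < 2 ^ (j + 1) := Nat.lt_pow_succ_log_self one_lt_two N
  have hω : ω ∈ dyadicDev Xs a j :=
    mem_biUnion (Finset.mem_Ico.2 ⟨Nat.pow_log_le_self 2 hN_pos.ne', hN_lt⟩)
      (le_abs_partialSum_div_of_lastDev_eq hN.symm hN_pos)
  calc ENNReal.ofReal (G N) ≤ ENNReal.ofReal (G (2 ^ (j + 1))) :=
        ENNReal.ofReal_le_ofReal <| hG (mem_Ici.2 (by positivity)) (mem_Ici.2 (by positivity))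
          (by exact_mod_cast hN_lt.le)
    _ = (dyadicDev Xs a j).indicator (fun _ ↦ ENNReal.ofReal (G (2 ^ (j + 1)))) ω :=
        (indicator_of_mem hω (fun _ ↦ ENNReal.ofReal (G (2 ^ (j + 1))))).symm
    _ ≤ _ := (ENNReal.le_tsum j).trans le_add_self

end PartialSums

section Probability

variable {Ω : Type*} [MeasurableSpace Ω] {μ : Measure Ω} {Xs : ℕ → Ω → ℝ} {G : ℝ → ℝ} {a : ℝ}

lemma measurable_partialSum (hXs : ∀ n, Measurable (Xs n)) (n : ℕ) :
    Measurable (partialSum Xs n) :=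
  Finset.measurable_sum _ fun i _ ↦ hXs i

lemma ae_tendsto_partialSum_div {X : Ω → ℝ} (hindep : iIndepFun Xs μ)
    (hident : ∀ n, IdentDistrib (Xs n) X μ μ) (hint : Integrable X μ) (hcent : μ[X] = 0) :
    ∀ᵐ ω ∂μ, Tendsto (fun n : ℕ ↦ partialSum Xs n ω / n) atTop (𝓝 0) := by
  have hident0 : ∀ n, IdentDistrib (Xs n) (Xs 0) μ μ := fun n ↦ (hident n).trans (hident 0).symm
  have hslln := strong_law_ae_real Xs ((hident 0).integrable_iff.2 hint)
    (fun i j hij ↦ hindep.indepFun hij) hident0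
  rwa [(hident 0).integral_eq, hcent] at hslln

lemma tendsto_measure_le_abs_partialSum_div [IsFiniteMeasure μ] {X : Ω → ℝ}
    (hXs : ∀ n, Measurable (Xs n)) (hindep : iIndepFun Xs μ)
    (hident : ∀ n, IdentDistrib (Xs n) X μ μ) (hint : Integrable X μ) (hcent : μ[X] = 0)
    {δ : ℝ} (hδ : 0 < δ) :
    Tendsto (fun n : ℕ ↦ μ {ω | δ ≤ |partialSum Xs n ω / n|}) atTop (𝓝 0) := by
  have := tendstoInMeasure_iff_dist.1 (tendstoInMeasure_of_tendsto_ae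
    (fun n ↦ ((measurable_partialSum hXs n).div_const _).aestronglyMeasurable)
    (ae_tendsto_partialSum_div hindep hident hint hcent)) δ hδ
  simpa [Real.dist_eq, abs_div] using this

lemma measure_inter_increment_eq_mul (hXs : ∀ n, Measurable (Xs n)) (hindep : iIndepFun Xs μ)
    {n k : ℕ} (hnk : n ≤ k) {E : Set Ω}
    (hE : MeasurableSet[⨆ i ∈ Iio n, MeasurableSpace.comap (Xs i) inferInstance] E)
    {V : Set ℝ} (hV : MeasurableSet V) :
    μ (E ∩ {ω | partialSum Xs k ω - partialSum Xs n ω ∈ V})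
      = μ E * μ {ω | partialSum Xs k ω - partialSum Xs n ω ∈ V} := by
  have hincrement : (fun ω ↦ partialSum Xs k ω - partialSum Xs n ω)
      = fun ω ↦ ∑ i ∈ Finset.Ico n k, Xs i ω :=
    funext fun ω ↦ (Finset.sum_Ico_eq_sub _ hnk).symm
  have hindep_past_future := indep_iSup_of_disjoint (fun i ↦ (hXs i).comap_le)
    ((iIndepFun_iff_iIndep _ _ _).1 hindep) (S := Iio n) (T := Ico n k)
    (Set.disjoint_left.2 fun i hi hi' ↦ by simp only [mem_Iio, mem_Ico] at hi hi'; omega)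
  have hfuture :=
    measurable_sum_iSup_comap (Xs := Xs) (S := Ico n k) (t := Finset.Ico n k) (by simp) hV
  rw [← hincrement] at hfuture
  exact (Indep_iff _ _ _).1 hindep_past_future _ _ hE hfuture

lemma measure_biUnion_preimage_partialSum_le [IsProbabilityMeasure μ]
    (hXs : ∀ n, Measurable (Xs n)) (hindep : iIndepFun Xs μ) {s : Finset ℕ} {k : ℕ}
    (hsk : ∀ N ∈ s, N ≤ k) {U : ℕ → Set ℝ} (hU : ∀ N, MeasurableSet (U N))
    {D : Set Ω} (hD : MeasurableSet D) {t : ℝ}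
    (hsmall : ∀ N ∈ s, μ {ω | t ≤ |partialSum Xs k ω - partialSum Xs N ω|} ≤ 2⁻¹)
    (hsub : ∀ N ∈ s, ∀ ω, partialSum Xs N ω ∈ U N →
      |partialSum Xs k ω - partialSum Xs N ω| < t → ω ∈ D) :
    μ (⋃ N ∈ s, partialSum Xs N ⁻¹' U N) ≤ 2 * μ D := by
  -- `disjointed B n` is the event that `n` is the first index of `s` with `S_n ∈ U n`;
  -- it is determined by `X_0, …, X_{n-1}`.
  set B : ℕ → Set Ω := fun N ↦ if N ∈ s then partialSum Xs N ⁻¹' U N else ∅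
  have hB_past : ∀ n M, M ≤ n →
      MeasurableSet[⨆ i ∈ Iio n, MeasurableSpace.comap (Xs i) inferInstance] (B M) := by
    intro n M hMn
    by_cases hM : M ∈ s
    · simpa only [B, if_pos hM] using measurable_partialSum_iSup_comap_Iio hMn (hU M)
    · simp only [B, if_neg hM, MeasurableSet.empty]
  have hunion : ⋃ N ∈ s, partialSum Xs N ⁻¹' U N = ⋃ N, B N := by
    ext ω; simp [B]
  rw [hunion]
  refine measure_iUnion_le_of_disjointed_le
    (fun N ↦ iSup₂_le (fun i _ ↦ (hXs i).comap_le) _ (hB_past N N le_rfl)) hD fun n ↦ ?_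
  by_cases hn : n ∈ s
  swap
  · have : disjointed B n = ∅ := subset_empty_iff.1 <| by
      simpa [B, hn] using disjointed_subset B n
    simp [this]
  set C : Set Ω := {ω | partialSum Xs k ω - partialSum Xs n ω ∈ {x : ℝ | t ≤ |x|}ᶜ}
  have hinter : μ (disjointed B n ∩ C) = μ (disjointed B n) * μ C :=
    measure_inter_increment_eq_mul hXs hindep (hsk n hn)
      (MeasurableSet.disjointed_of_le fun M hM ↦ hB_past n M hM)
      (measurableSet_le measurable_const measurable_abs).compl
  have hC : 2⁻¹ ≤ μ C := inv_two_le_prob_compl (measurableSet_le measurable_const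
    ((measurable_partialSum hXs k).sub (measurable_partialSum hXs n)).abs) (hsmall n hn)
  have hCD : disjointed B n ∩ C ⊆ disjointed B n ∩ D := by
    rintro ω ⟨hωB, hωC⟩
    have hωU : partialSum Xs n ω ∈ U n := by
      simpa [B, hn] using disjointed_subset B n hωB
    exact ⟨hωB, hsub n hn ω hωU (not_le.1 hωC)⟩
  calc μ (disjointed B n) = μ (disjointed B n) * (2 * 2⁻¹) := by
        rw [ENNReal.mul_inv_cancel two_ne_zero ENNReal.ofNat_ne_top, mul_one]
    _ ≤ μ (disjointed B n) * (2 * μ C) := by gcongr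
    _ = 2 * μ (disjointed B n ∩ C) := by rw [hinter]; ring
    _ ≤ 2 * μ (disjointed B n ∩ D) := by gcongr

lemma eventually_measure_dyadicDev_le [IsProbabilityMeasure μ] {X : Ω → ℝ}
    (hXs : ∀ n, Measurable (Xs n)) (hindep : iIndepFun Xs μ)
    (hident : ∀ n, IdentDistrib (Xs n) X μ μ) (hint : Integrable X μ) (hcent : μ[X] = 0)
    (ha : 0 < a) :
    ∀ᶠ j in atTop, ∀ k ∈ Finset.Ico (2 ^ (j + 1)) (2 ^ (j + 2)),
      μ (dyadicDev Xs a j) ≤ 2 * μ {ω | a / 8 ≤ |partialSum Xs k ω / k|} := by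
  obtain ⟨M, hM⟩ := eventually_atTop.1 <|
    (tendsto_measure_le_abs_partialSum_div hXs hindep hident hint hcent
      (by positivity : 0 < a / 16)).eventually
      (Iic_mem_nhds (ENNReal.half_pos (by norm_num : (2⁻¹ : ℝ≥0∞) ≠ 0)))
  filter_upwards [eventually_ge_atTop M] with j hj k hk
  have hM_block : ∀ n, 2 ^ j ≤ n → μ {ω | a / 16 ≤ |partialSum Xs n ω / n|} ≤ 2⁻¹ / 2 :=
    fun n hn ↦ hM n (hj.trans (Nat.lt_two_pow_self.le.trans hn))
  have hk_lo : 2 ^ j ≤ k :=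
    (Nat.pow_le_pow_right two_pos j.le_succ).trans (Finset.mem_Ico.1 hk).1
  refine measure_biUnion_preimage_partialSum_le hXs hindep (k := k) (t := a * 2 ^ j / 2)
    (U := fun N ↦ {x | a ≤ |x / N|}) (fun N hN ↦ ((Finset.mem_Ico.1 hN).2.trans_le
      (Finset.mem_Ico.1 hk).1).le)
    (fun N ↦ measurableSet_le measurable_const (measurable_id.div_const _).abs)
    (measurableSet_le measurable_const ((measurable_partialSum hXs k).div_const _).abs)
    (fun N hN ↦ ?_) (fun N hN ω ↦ div_eight_le_abs_partialSum_div hN hk)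
  calc μ {ω | a * 2 ^ j / 2 ≤ |partialSum Xs k ω - partialSum Xs N ω|}
      ≤ μ ({ω | a / 16 ≤ |partialSum Xs k ω / k|} ∪ {ω | a / 16 ≤ |partialSum Xs N ω / N|}) :=
        measure_mono fun _ ↦ div_sixteen_le_abs_partialSum_div_or hN hk
    _ ≤ 2⁻¹ / 2 + 2⁻¹ / 2 := (measure_union_le _ _).trans
        (add_le_add (hM_block k hk_lo) (hM_block N (Finset.mem_Ico.1 hN).1))
    _ = 2⁻¹ := ENNReal.add_halves _

lemma measurableSet_dyadicDev (hXs : ∀ n, Measurable (Xs n)) (j : ℕ) :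
    MeasurableSet (dyadicDev Xs a j) :=
  MeasurableSet.biUnion (Finset.countable_toSet _) fun N _ ↦
    measurableSet_le measurable_const ((measurable_partialSum hXs N).div_const _).abs

lemma lintegral_evalG_lastDev_le [IsProbabilityMeasure μ] (hXs : ∀ n, Measurable (Xs n))
    (hG : MonotoneOn G (Ici 0)) (hfin : ∀ᵐ ω ∂μ, lastDev Xs a ω ≠ ⊤) :
    ∫⁻ ω, evalG G (lastDev Xs a ω) ∂μ ≤
      ENNReal.ofReal (G 0) + ∑' j, ENNReal.ofReal (G (2 ^ (j + 1))) * μ (dyadicDev Xs a j) :=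
  calc ∫⁻ ω, evalG G (lastDev Xs a ω) ∂μ
      ≤ ∫⁻ ω, ENNReal.ofReal (G 0) +
          ∑' j, (dyadicDev Xs a j).indicator (fun _ ↦ ENNReal.ofReal (G (2 ^ (j + 1)))) ω ∂μ :=
        lintegral_mono_ae (hfin.mono fun _ ↦ evalG_lastDev_le hG)
    _ = _ := by
        rw [lintegral_add_left measurable_const, lintegral_const, measure_univ, mul_one,
          lintegral_tsum fun j ↦
            (measurable_const.indicator (measurableSet_dyadicDev hXs j)).aemeasurable]
        simp_rw [lintegral_indicator_const (measurableSet_dyadicDev hXs _)]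

noncomputable def devTerm (μ : Measure Ω) (Xs : ℕ → Ω → ℝ) (G : ℝ → ℝ) (a : ℝ) (n : ℕ) : ℝ≥0∞ :=
  (n : ℝ≥0∞)⁻¹ * ENNReal.ofReal (G n) * μ {ω | a ≤ |partialSum Xs n ω / n|}

lemma sum_Ico_devTerm_le_devSeries (M : ℕ) :
    ∑ n ∈ Finset.Ico 1 M, devTerm μ Xs G a n ≤ devSeries μ Xs G a := by
  have hseries : devSeries μ Xs G a = ∑' n, {n : ℕ | 1 ≤ n}.indicator (devTerm μ Xs G a) n :=
    tsum_subtype {n : ℕ | 1 ≤ n} (devTerm μ Xs G a)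
  rw [hseries]
  refine le_of_eq_of_le (Finset.sum_congr rfl fun n hn ↦ ?_) (ENNReal.sum_le_tsum _)
  exact (indicator_of_mem (Finset.mem_Ico.1 hn).1 _).symm

lemma ofReal_mul_measure_dyadicDev_le (hG : MonotoneOn G (Ici 0)) {j : ℕ}
    (hj : ∀ k ∈ Finset.Ico (2 ^ (j + 1)) (2 ^ (j + 2)),
      μ (dyadicDev Xs a j) ≤ 2 * μ {ω | a / 8 ≤ |partialSum Xs k ω / k|}) :
    ENNReal.ofReal (G (2 ^ (j + 1))) * μ (dyadicDev Xs a j)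
      ≤ 4 * ∑ k ∈ Finset.Ico (2 ^ (j + 1)) (2 ^ (j + 2)), devTerm μ Xs G (a / 8) k := by
  rw [pow_succ' 2 (j + 1)] at hj ⊢
  calc ENNReal.ofReal (G (2 ^ (j + 1))) * μ (dyadicDev Xs a j)
      ≤ 2 * ∑ k ∈ Finset.Ico (2 ^ (j + 1)) (2 * 2 ^ (j + 1)), ((k : ℕ) : ℝ≥0∞)⁻¹ *
          (ENNReal.ofReal (G k) * (2 * μ {ω | a / 8 ≤ |partialSum Xs k ω / k|})) := by
        refine ENNReal.le_two_mul_sum_Ico_inv_mul (by positivity) fun k hk ↦ ?_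
        refine mul_le_mul' (ENNReal.ofReal_le_ofReal
          (hG (mem_Ici.2 (by positivity)) (mem_Ici.2 (by positivity)) ?_)) (hj k hk)
        exact_mod_cast (Finset.mem_Ico.1 hk).1
    _ = 4 * ∑ k ∈ Finset.Ico (2 ^ (j + 1)) (2 * 2 ^ (j + 1)), devTerm μ Xs G (a / 8) k := by
        rw [Finset.mul_sum, Finset.mul_sum]
        refine Finset.sum_congr rfl fun k _ ↦ ?_
        simp only [devTerm]
        ring

lemma tsum_ofReal_mul_measure_dyadicDev_lt_top [IsFiniteMeasure μ] (hG : MonotoneOn G (Ici 0))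
    (hblock : ∀ᶠ j in atTop, ∀ k ∈ Finset.Ico (2 ^ (j + 1)) (2 ^ (j + 2)),
      μ (dyadicDev Xs a j) ≤ 2 * μ {ω | a / 8 ≤ |partialSum Xs k ω / k|})
    (hser : devSeries μ Xs G (a / 8) < ⊤) :
    ∑' j, ENNReal.ofReal (G (2 ^ (j + 1))) * μ (dyadicDev Xs a j) < ⊤ := by
  obtain ⟨j₀, hj₀⟩ := eventually_atTop.1 hblock
  rw [← ENNReal.summable.sum_add_tsum_nat_add' (k := j₀)]
  refine ENNReal.add_lt_top.2 ⟨ENNReal.sum_lt_top.2 fun j _ ↦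
    ENNReal.mul_lt_top ENNReal.ofReal_lt_top (measure_lt_top _ _), ?_⟩
  set block : ℕ → ℝ≥0∞ := fun j ↦ ∑ k ∈ Finset.Ico (2 ^ j) (2 ^ (j + 1)), devTerm μ Xs G (a / 8) k
  calc ∑' j, ENNReal.ofReal (G (2 ^ (j + j₀ + 1))) * μ (dyadicDev Xs a (j + j₀))
      ≤ ∑' j, 4 * block (j + j₀ + 1) :=
        ENNReal.tsum_le_tsum fun j ↦ ofReal_mul_measure_dyadicDev_le hG (hj₀ _ (by omega))
    _ ≤ 4 * ∑' j, block j := by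
        rw [ENNReal.tsum_mul_left]
        gcongr 4 * ?_
        exact ENNReal.tsum_comp_le_tsum_of_injective (fun _ _ h ↦ by simpa using h) block
    _ ≤ 4 * devSeries μ Xs G (a / 8) := by
        gcongr
        refine ENNReal.tsum_le_of_sum_range_le fun n ↦ ?_
        rw [Finset.sum_range_sum_Ico_of_monotone (pow_right_mono₀ one_le_two), pow_zero]
        exact sum_Ico_devTerm_le_devSeries _
    _ < ⊤ := ENNReal.mul_lt_top (by norm_num) hser

end Probability

theorem stmt2_general {Ω : Type*} [MeasurableSpace Ω] (μ : Measure Ω) [IsProbabilityMeasure μ]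
    (X : Ω → ℝ) (Xs : ℕ → Ω → ℝ)
    (hXs : ∀ n, Measurable (Xs n))
    (hindep : iIndepFun Xs μ)
    (hident : ∀ n, IdentDistrib (Xs n) X μ μ)
    (hint : Integrable X μ) (hcent : μ[X] = 0)
    (G : ℝ → ℝ) (hG : Moderate G)
    (hser : ∀ a > (0 : ℝ), devSeries μ Xs G a < ⊤) :
    ∀ a > (0 : ℝ), (∀ᵐ ω ∂μ, lastDev Xs a ω ≠ ⊤) ∧
      ∫⁻ ω, evalG G (lastDev Xs a ω) ∂μ < ⊤ := by
  intro a ha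
  have hfin : ∀ᵐ ω ∂μ, lastDev Xs a ω ≠ ⊤ :=
    (ae_tendsto_partialSum_div hindep hident hint hcent).mono fun _ ↦
      lastDev_ne_top_of_tendsto ha
  refine ⟨hfin, (lintegral_evalG_lastDev_le hXs hG.2.1 hfin).trans_lt ?_⟩
  exact ENNReal.add_lt_top.2 ⟨ENNReal.ofReal_lt_top,
    tsum_ofReal_mul_measure_dyadicDev_lt_top hG.2.1
      (eventually_measure_dyadicDev_le hXs hindep hident hint hcent ha)
      (hser _ (by positivity))⟩

theorem stmt2 {Ω : Type*} [MeasurableSpace Ω] (μ : Measure Ω) [IsProbabilityMeasure μ]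
    (X : Ω → ℝ) (Xs : ℕ → Ω → ℝ)
    (hX : Measurable X) (hXs : ∀ n, Measurable (Xs n))
    (hindep : iIndepFun Xs μ)
    (hident : ∀ n, IdentDistrib (Xs n) X μ μ)
    (hint : Integrable X μ) (hcent : μ[X] = 0)
    (G : ℝ → ℝ) (hG : Moderate G)
    (hser : ∀ a > (0 : ℝ), devSeries μ Xs G a < ⊤) :
    ∀ a > (0 : ℝ), (∀ᵐ ω ∂μ, lastDev Xs a ω ≠ ⊤) ∧
      ∫⁻ ω, evalG G (lastDev Xs a ω) ∂μ < ⊤ :=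
  stmt2_general μ X Xs hXs hindep hident hint hcent G hG hser
end

section
/- Let X and (X_n)_{n≥1} be i.i.d. integrable real random variables with E[X]=0, and let G be a moderate function. If for every a > 0 the last deviation time L_a is almost surely finite and G(L_a) is integrable, then |X|·G(|X|) is integrable. -/
open MeasureTheory ProbabilityTheory ENNReal

/-!
Write `q k = P(|X| ≥ 2(k+1))`. A jump `|X_{k+1}| ≥ 2(k+1)` forces `L_1 ≥ k`, so for large `n`
the independent events `{|X_{k+1}| ≥ 2(k+1)}`, `k > n`, have a union of probability at most
`P(L_1 > n) ≤ 1/4`. For independent events whose union is that unlikely, the sum of the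
probabilities is at most twice the probability of the union (`∏ (1 - q) ≤ exp (-∑ q)`), so the tails
`∑_{k > n} q k` are eventually bounded by `2 P(L_1 > n)`. Abel summation against the increments of
`G` then gives `∑ G(k) q k ≲ 1 + E G(L_1) + G(0) E|X| < ∞`. Finally, the doubling condition gives
`|X| G(|X|) ≲ 1 + ∑_{k < |X|/2} G(k)`, whose expectation is `∑ G(k) q k`.
-/

open Finset Filter Topology

lemma Finset.sum_le_two_mul_one_sub_prod_one_sub {ι : Type*} (s : Finset ι) {q : ι → ℝ}
    (hq₀ : ∀ i ∈ s, 0 ≤ q i) (hq₁ : ∀ i ∈ s, q i ≤ 1)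
    (hsmall : 1 - ∏ i ∈ s, (1 - q i) ≤ 1 / 4) :
    ∑ i ∈ s, q i ≤ 2 * (1 - ∏ i ∈ s, (1 - q i)) := by
  set P := ∏ i ∈ s, (1 - q i)
  set S := ∑ i ∈ s, q i
  have hS : 0 ≤ S := sum_nonneg hq₀
  have hP : P ≤ Real.exp (-S) := by
    rw [← sum_neg_distrib, Real.exp_sum]
    exact prod_le_prod (fun i hi => by linarith [hq₁ i hi])
      fun i _ => by linarith [Real.add_one_le_exp (-q i)]
  have hP₀ : 0 ≤ P := prod_nonneg fun i hi => by linarith [hq₁ i hi]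
  have hSP : (1 + S) * P ≤ 1 :=
    calc (1 + S) * P ≤ Real.exp S * Real.exp (-S) :=
          mul_le_mul (by linarith [Real.add_one_le_exp S]) hP hP₀ (Real.exp_pos S).le
      _ = 1 := by rw [← Real.exp_add, add_neg_cancel, Real.exp_zero]
  nlinarith

lemma tsum_ite_lt_eq_sum_range {M : Type*} [AddCommMonoid M] [TopologicalSpace M]
    (f : ℕ → M) (m : ℕ) : ∑' n, (if n < m then f n else 0) = ∑ n ∈ range m, f n := by
  rw [tsum_eq_sum (s := range m) fun n hn => if_neg (by simpa using hn)]
  exact sum_congr rfl fun n hn => if_pos (mem_range.1 hn)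

lemma ENNReal.tsum_mul_tsum_add_eq (d q : ℕ → ℝ≥0∞) :
    ∑' n, d n * ∑' j, q (n + 1 + j) = ∑' k, q k * ∑ n ∈ range k, d n := by
  have hshift : ∀ n, ∑' j, q (n + 1 + j) = ∑' k, if n < k then q k else 0 := fun n => by
    rw [(HasSum.sum_range_add (f := fun k => if n < k then q k else 0) (k := n + 1)
      ENNReal.summable.hasSum).tsum_eq,
      sum_eq_zero fun k hk => if_neg (by simp only [mem_range] at hk; omega), zero_add]
    exact tsum_congr fun j => by rw [if_pos (by omega), add_comm j]
  simp_rw [hshift, ← ENNReal.tsum_mul_left, ← tsum_ite_lt_eq_sum_range]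
  rw [ENNReal.tsum_comm]
  refine tsum_congr fun k => ?_
  rw [← ENNReal.tsum_mul_left]
  refine tsum_congr fun n => ?_
  split_ifs <;> simp [mul_comm]

lemma ENNReal.tsum_mul_ne_top_of_eventually_le {d t u : ℕ → ℝ≥0∞} {C : ℝ≥0∞}
    (hd : ∀ n, d n ≠ ∞) (ht : ∀ n, t n ≤ C) (hC : C ≠ ∞) (htu : ∀ᶠ n in atTop, t n ≤ u n)
    (hdu : ∑' n, d n * u n ≠ ∞) : ∑' n, d n * t n ≠ ∞ := by
  obtain ⟨N, hN⟩ := eventually_atTop.1 htu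
  rw [(HasSum.sum_range_add (f := fun n => d n * t n) (k := N) ENNReal.summable.hasSum).tsum_eq]
  refine ENNReal.add_ne_top.2 ⟨ENNReal.sum_ne_top.2 fun n _ =>
    ENNReal.mul_ne_top (hd n) (ne_top_of_le_ne_top hC (ht n)), ne_top_of_le_ne_top hdu ?_⟩
  calc ∑' n, d (n + N) * t (n + N) ≤ ∑' n, d (n + N) * u (n + N) :=
        ENNReal.tsum_le_tsum fun n => by gcongr; exact hN _ (Nat.le_add_left N n)
    _ ≤ ∑' n, d n * u n :=
        ENNReal.tsum_comp_le_tsum_of_injective (add_left_injective N) fun n => d n * u n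

lemma sum_range_ofReal_sub_of_monotoneOn {G : ℝ → ℝ} (hG : MonotoneOn G (Set.Ici 0)) (m : ℕ) :
    ∑ n ∈ range m, ENNReal.ofReal (G (n + 1) - G n) = ENNReal.ofReal (G m - G 0) := by
  have hstep : ∀ n : ℕ, 0 ≤ G (n + 1) - G n := fun n =>
    sub_nonneg.2 (hG (Set.mem_Ici.2 n.cast_nonneg) (Set.mem_Ici.2 (by positivity)) (by linarith))
  rw [← ENNReal.ofReal_sum_of_nonneg fun n _ => hstep n]
  have := sum_range_sub (fun n : ℕ => G n) m
  push_cast at this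
  rw [this]

lemma tsum_ofReal_mul_ne_top_of_tail_le {G : ℝ → ℝ} (hG : MonotoneOn G (Set.Ici 0))
    {q u : ℕ → ℝ≥0∞} (hq : ∑' k, q k ≠ ∞) (htail : ∀ᶠ n in atTop, ∑' j, q (n + 1 + j) ≤ u n)
    (hu : ∑' n : ℕ, ENNReal.ofReal (G (n + 1) - G n) * u n ≠ ∞) :
    ∑' k : ℕ, ENNReal.ofReal (G k) * q k ≠ ∞ := by
  have hincr : ∑' k : ℕ, q k * ENNReal.ofReal (G k - G 0) ≠ ∞ := by
    simp_rw [← sum_range_ofReal_sub_of_monotoneOn hG, ← ENNReal.tsum_mul_tsum_add_eq]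
    exact ENNReal.tsum_mul_ne_top_of_eventually_le (fun n => ENNReal.ofReal_ne_top)
      (fun n => ENNReal.tsum_comp_le_tsum_of_injective (add_right_injective (n + 1)) q) hq
      htail hu
  have hle : ∀ k : ℕ, ENNReal.ofReal (G k) * q k
      ≤ q k * ENNReal.ofReal (G k - G 0) + ENNReal.ofReal (G 0) * q k := fun k => by
    rw [mul_comm (q k), ← add_mul]
    gcongr
    calc ENNReal.ofReal (G k) = ENNReal.ofReal (G k - G 0 + G 0) := by rw [sub_add_cancel]
      _ ≤ _ := ENNReal.ofReal_add_le
  refine ne_top_of_le_ne_top ?_ (ENNReal.tsum_le_tsum hle)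
  rw [ENNReal.tsum_add, ENNReal.tsum_mul_left]
  exact ENNReal.add_ne_top.2 ⟨hincr, ENNReal.mul_ne_top ENNReal.ofReal_ne_top hq⟩

lemma Moderate.exists_mul_le_sum_range {G : ℝ → ℝ} (hG : Moderate G) :
    ∃ C ≥ 0, ∀ r ≥ 0, r * G r ≤ C * (1 + ∑ k ∈ range ⌊r / 2⌋₊, G k) := by
  obtain ⟨hpos, hmono, -, c, hc⟩ := hG
  have hc₀ : 0 ≤ c := by
    have h0 := hc 0 le_rfl
    rw [mul_zero] at h0
    nlinarith [hpos 0 le_rfl]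
  have hG8 : ∀ t ≥ 0, G (8 * t) ≤ c ^ 3 * G t := fun t ht =>
    calc G (8 * t) = G (2 * (2 * (2 * t))) := by ring_nf
      _ ≤ c * G (2 * (2 * t)) := hc _ (by positivity)
      _ ≤ c * (c * G (2 * t)) := by gcongr; exact hc _ (by positivity)
      _ ≤ c * (c * (c * G t)) := by gcongr; exact hc t ht
      _ = c ^ 3 * G t := by ring
  have hG8pos := hpos 8 (by norm_num)
  refine ⟨8 * G 8 + 8 * c ^ 3, by positivity, fun r hr => ?_⟩
  have hsum₀ : 0 ≤ ∑ k ∈ range ⌊r / 2⌋₊, G k := sum_nonneg fun k _ => (hpos k k.cast_nonneg).le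
  rcases lt_or_ge r 8 with hr8 | hr8
  · have : r * G r ≤ 8 * G 8 := mul_le_mul hr8.le (hmono hr (by norm_num) hr8.le)
      (hpos r hr).le (by norm_num)
    nlinarith [pow_nonneg hc₀ 3]
  -- the upper half of `0, …, ⌊r/2⌋ - 1` contains `⌊r/4⌋` terms, each at least `G r / c ^ 3`
  set m := ⌊r / 4⌋₊
  have hm₁ : 1 ≤ m := Nat.le_floor (by norm_num; linarith)
  have hrm : r ≤ 8 * m := by
    have := Nat.lt_floor_add_one (r / 4)
    have : (1 : ℝ) ≤ m := by exact_mod_cast hm₁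
    linarith
  have h2m : m + m ≤ ⌊r / 2⌋₊ :=
    Nat.le_floor (by push_cast; linarith [Nat.floor_le (show 0 ≤ r / 4 by positivity)])
  have hGr : G r ≤ c ^ 3 * G m :=
    (hmono hr (Set.mem_Ici.2 (by positivity)) hrm).trans (hG8 m m.cast_nonneg)
  have hmG : m * G m ≤ ∑ k ∈ range ⌊r / 2⌋₊, G k :=
    calc m * G m = ∑ _j ∈ range m, G m := by simp
      _ ≤ ∑ j ∈ range m, G (m + j : ℕ) := sum_le_sum fun j _ =>
          hmono (Set.mem_Ici.2 m.cast_nonneg) (Set.mem_Ici.2 (Nat.cast_nonneg _)) (by simp)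
      _ ≤ ∑ k ∈ range (m + m), G k := by
          rw [sum_range_add]
          exact le_add_of_nonneg_left (sum_nonneg fun k _ => (hpos k k.cast_nonneg).le)
      _ ≤ ∑ k ∈ range ⌊r / 2⌋₊, G k := sum_le_sum_of_subset_of_nonneg (range_mono h2m)
          fun k _ _ => (hpos k k.cast_nonneg).le
  calc r * G r ≤ (8 * m) * (c ^ 3 * G m) :=
        mul_le_mul hrm hGr (hpos r hr).le (by positivity)
    _ = 8 * c ^ 3 * (m * G m) := by ring
    _ ≤ 8 * c ^ 3 * ∑ k ∈ range ⌊r / 2⌋₊, G k := by gcongr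
    _ ≤ (8 * G 8 + 8 * c ^ 3) * (1 + ∑ k ∈ range ⌊r / 2⌋₊, G k) := by
        nlinarith [mul_nonneg hG8pos.le hsum₀, pow_nonneg hc₀ 3]

section Measure

variable {Ω : Type*} [MeasurableSpace Ω]

theorem ProbabilityTheory.iIndepFun.tsum_measure_preimage_le_two_mul
    {μ : Measure Ω} {ι β : Type*} [MeasurableSpace β] {f : ι → Ω → β} (hf : iIndepFun f μ)
    (hfm : ∀ i, Measurable (f i))
    {B : ι → Set β} (hB : ∀ i, MeasurableSet (B i))
    (hsmall : μ (⋃ i, f i ⁻¹' B i) ≤ 1 / 4) :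
    ∑' i, μ (f i ⁻¹' B i) ≤ 2 * μ (⋃ i, f i ⁻¹' B i) := by
  have := hf.isProbabilityMeasure
  rw [ENNReal.tsum_eq_iSup_sum]
  refine iSup_le fun s => ?_
  have hA : ∀ i, MeasurableSet (f i ⁻¹' B i) := fun i => hB i |>.preimage (hfm i)
  have hunion : μ.real (⋃ i ∈ s, f i ⁻¹' B i) = 1 - ∏ i ∈ s, (1 - μ.real (f i ⁻¹' B i)) := by
    have hcompl := hf.measure_inter_preimage_eq_mul s (sets := fun i => (B i)ᶜ)
      fun i _ => (hB i).compl
    simp only [Set.preimage_compl] at hcompl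
    rw [← compl_compl (⋃ i ∈ s, f i ⁻¹' B i), probReal_compl_eq_one_sub
      (s.measurableSet_biUnion fun i _ => hA i).compl, Set.compl_iUnion₂, measureReal_def,
      hcompl, ENNReal.toReal_prod]
    congr 1
    refine prod_congr rfl fun i _ => ?_
    rw [← measureReal_def, probReal_compl_eq_one_sub (hA i)]
  have hsub : μ (⋃ i ∈ s, f i ⁻¹' B i) ≤ μ (⋃ i, f i ⁻¹' B i) :=
    measure_mono (Set.iUnion₂_subset fun i _ => Set.subset_iUnion (fun i => f i ⁻¹' B i) i)
  have hsmall' : μ.real (⋃ i ∈ s, f i ⁻¹' B i) ≤ 1 / 4 := by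
    simpa [measureReal_def] using ENNReal.toReal_mono (by simp) (hsub.trans hsmall)
  have key := Finset.sum_le_two_mul_one_sub_prod_one_sub s (q := fun i => μ.real (f i ⁻¹' B i))
    (fun i _ => measureReal_nonneg) (fun i _ => measureReal_le_one) (hunion ▸ hsmall')
  rw [← hunion] at key
  calc ∑ i ∈ s, μ (f i ⁻¹' B i) = ENNReal.ofReal (∑ i ∈ s, μ.real (f i ⁻¹' B i)) := by
        rw [ENNReal.ofReal_sum_of_nonneg fun i _ => measureReal_nonneg]
        exact sum_congr rfl fun i _ => (ofReal_measureReal (measure_ne_top μ _)).symm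
    _ ≤ ENNReal.ofReal (2 * μ.real (⋃ i ∈ s, f i ⁻¹' B i)) := ENNReal.ofReal_le_ofReal key
    _ = 2 * μ (⋃ i ∈ s, f i ⁻¹' B i) := by
        rw [ENNReal.ofReal_mul zero_le_two, ofReal_measureReal (measure_ne_top μ _),
          ENNReal.ofReal_ofNat]
    _ ≤ 2 * μ (⋃ i, f i ⁻¹' B i) := by gcongr

lemma tsum_mul_measure_add_one_le_eq_lintegral (μ : Measure Ω)
    {Y : Ω → ℝ} (hY : Measurable Y) (hY₀ : ∀ ω, 0 ≤ Y ω) (f : ℕ → ℝ≥0∞) :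
    ∑' k : ℕ, f k * μ {ω | (k + 1 : ℝ) ≤ Y ω} = ∫⁻ ω, ∑ k ∈ range ⌊Y ω⌋₊, f k ∂μ := by
  have hmeas : ∀ k : ℕ, MeasurableSet {ω | (k + 1 : ℝ) ≤ Y ω} :=
    fun k => measurableSet_le measurable_const hY
  have hpt : ∀ ω, ∑ k ∈ range ⌊Y ω⌋₊, f k
      = ∑' k : ℕ, {ω | (k + 1 : ℝ) ≤ Y ω}.indicator (fun _ => f k) ω := fun ω => by
    rw [← tsum_ite_lt_eq_sum_range]
    refine tsum_congr fun k => ?_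
    simp only [Set.indicator_apply, Set.mem_ofPred_eq, Nat.lt_iff_add_one_le,
      Nat.le_floor_iff (hY₀ ω), Nat.cast_add_one]
  simp_rw [hpt]
  rw [lintegral_tsum fun k => (measurable_const.indicator (hmeas k)).aemeasurable]
  exact tsum_congr fun k => (lintegral_indicator_const (hmeas k) _).symm

lemma tsum_measure_add_one_le_le_lintegral (μ : Measure Ω) {Y : Ω → ℝ} (hY : Measurable Y)
    (hY₀ : ∀ ω, 0 ≤ Y ω) : ∑' k : ℕ, μ {ω | (k + 1 : ℝ) ≤ Y ω} ≤ ∫⁻ ω, ENNReal.ofReal (Y ω) ∂μ := by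
  have h := tsum_mul_measure_add_one_le_eq_lintegral μ hY hY₀ 1
  simp only [Pi.one_apply, one_mul, sum_const, card_range, nsmul_eq_mul, mul_one] at h
  rw [h]
  refine lintegral_mono fun ω => ?_
  rw [← ENNReal.ofReal_natCast]
  exact ENNReal.ofReal_le_ofReal (Nat.floor_le (hY₀ ω))

lemma Moderate.lintegral_ofReal_mul_lt_top {G : ℝ → ℝ} (hG : Moderate G) (μ : Measure Ω)
    [IsFiniteMeasure μ] {Y : Ω → ℝ} (hY₀ : ∀ ω, 0 ≤ Y ω)
    (hsum : ∫⁻ ω, ∑ k ∈ range ⌊Y ω / 2⌋₊, ENNReal.ofReal (G k) ∂μ ≠ ∞) :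
    ∫⁻ ω, ENNReal.ofReal (Y ω * G (Y ω)) ∂μ < ∞ := by
  obtain ⟨C, hC₀, hC⟩ := hG.exists_mul_le_sum_range
  have hpt : ∀ ω, ENNReal.ofReal (Y ω * G (Y ω))
      ≤ ENNReal.ofReal C * (1 + ∑ k ∈ range ⌊Y ω / 2⌋₊, ENNReal.ofReal (G k)) := fun ω => by
    have hG₀ : ∀ k : ℕ, 0 ≤ G k := fun k => (hG.1 k k.cast_nonneg).le
    rw [← ENNReal.ofReal_sum_of_nonneg fun k _ => hG₀ k, ← ENNReal.ofReal_one,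
      ← ENNReal.ofReal_add zero_le_one (sum_nonneg fun k _ => hG₀ k), ← ENNReal.ofReal_mul hC₀]
    exact ENNReal.ofReal_le_ofReal (hC _ (hY₀ ω))
  calc ∫⁻ ω, ENNReal.ofReal (Y ω * G (Y ω)) ∂μ
      ≤ ∫⁻ ω, ENNReal.ofReal C * (1 + ∑ k ∈ range ⌊Y ω / 2⌋₊, ENNReal.ofReal (G k)) ∂μ :=
        lintegral_mono hpt
    _ = ENNReal.ofReal C
          * (μ Set.univ + ∫⁻ ω, ∑ k ∈ range ⌊Y ω / 2⌋₊, ENNReal.ofReal (G k) ∂μ) := by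
        rw [lintegral_const_mul' _ _ ENNReal.ofReal_ne_top, lintegral_add_left measurable_const,
          lintegral_one]
    _ < ∞ := ENNReal.mul_lt_top ENNReal.ofReal_lt_top
        (ENNReal.add_lt_top.2 ⟨measure_lt_top μ _, hsum.lt_top⟩)

lemma tendsto_measure_lt_atTop_zero {μ : Measure Ω}
    [IsFiniteMeasure μ] {L : Ω → ℕ∞} (hL : ∀ n : ℕ, MeasurableSet {ω | (n : ℕ∞) < L ω})
    (hfin : ∀ᵐ ω ∂μ, L ω ≠ ⊤) :
    Tendsto (fun n : ℕ => μ {ω | (n : ℕ∞) < L ω}) atTop (𝓝 0) := by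
  have hanti : Antitone fun n : ℕ => {ω | (n : ℕ∞) < L ω} := fun m n hmn ω hω =>
    show (m : ℕ∞) < L ω from lt_of_le_of_lt (Nat.cast_le.2 hmn) hω
  have hinter : μ (⋂ n : ℕ, {ω | (n : ℕ∞) < L ω}) = 0 := by
    refine measure_mono_null (fun ω hω => ?_) (ae_iff.1 hfin)
    simp only [Set.mem_iInter, Set.mem_ofPred_eq] at hω
    simpa using ENat.eq_top_iff_forall_gt.2 hω
  have h := tendsto_measure_iInter_atTop (fun n => (hL n).nullMeasurableSet) hanti
    ⟨0, measure_ne_top μ _⟩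
  rwa [hinter] at h

lemma tsum_mul_measure_lt_le_lintegral_evalG (μ : Measure Ω)
    {L : Ω → ℕ∞} (hL : ∀ n : ℕ, MeasurableSet {ω | (n : ℕ∞) < L ω}) {G : ℝ → ℝ}
    (hG : MonotoneOn G (Set.Ici 0)) (hG₀ : 0 ≤ G 0) :
    ∑' n : ℕ, ENNReal.ofReal (G (n + 1) - G n) * μ {ω | (n : ℕ∞) < L ω}
      ≤ ∫⁻ ω, evalG G (L ω) ∂μ := by
  simp_rw [← lintegral_indicator_const (hL _)]
  rw [← lintegral_tsum fun n => (measurable_const.indicator (hL n)).aemeasurable]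
  refine lintegral_mono fun ω => ?_
  by_cases hω : L ω = ⊤
  · rw [hω]
    exact le_top
  obtain ⟨m, hm⟩ := ENat.ne_top_iff_exists.1 hω
  simp only [Set.indicator_apply, Set.mem_ofPred_eq, ← hm, Nat.cast_lt]
  rw [tsum_ite_lt_eq_sum_range, sum_range_ofReal_sub_of_monotoneOn hG m]
  exact ENNReal.ofReal_le_ofReal (by linarith)

end Measure

section LastDeviation

variable {Ω : Type*} {X : ℕ → Ω → ℝ} {a : ℝ} {ω : Ω}

lemma le_lastDev {n : ℕ} (hn : 1 ≤ n) (h : a ≤ |partialSum X n ω / n|) :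
    (n : ℕ∞) ≤ lastDev X a ω :=
  le_biSup (fun n : ℕ => (n : ℕ∞)) ⟨hn, h⟩

lemma lt_lastDev_iff {m : ℕ} :
    (m : ℕ∞) < lastDev X a ω ↔ ∃ n : ℕ, m < n ∧ 1 ≤ n ∧ a ≤ |partialSum X n ω / n| := by
  rw [lastDev, lt_biSup_iff]
  simp only [Set.mem_ofPred_eq, Nat.cast_lt]
  tauto

lemma measurableSet_lt_lastDev [MeasurableSpace Ω] (hX : ∀ i, Measurable (X i)) (a : ℝ) (m : ℕ) :
    MeasurableSet {ω | (m : ℕ∞) < lastDev X a ω} := by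
  simp_rw [lt_lastDev_iff, Set.ofPred_exists]
  refine .iUnion fun n => ?_
  have hS : Measurable (partialSum X n) := Finset.measurable_sum _ fun i _ => hX i
  exact (MeasurableSet.const _).inter
    ((MeasurableSet.const _).inter (measurableSet_le measurable_const (hS.div_const _).abs))

/-- A jump `|X_{k+1}| ≥ 2a(k+1)` forces `|S_k| ≥ a k` or `|S_{k+1}| ≥ a (k+1)`. -/
lemma le_lastDev_of_two_mul_le_abs {k : ℕ} (h : 2 * a * (k + 1) ≤ |X k ω|) :
    (k : ℕ∞) ≤ lastDev X a ω := by
  rcases Nat.eq_zero_or_pos k with rfl | hk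
  · simp
  by_cases hSk : a * k ≤ |partialSum X k ω|
  · refine le_lastDev hk ?_
    rwa [abs_div, Nat.abs_cast, le_div_iff₀ (by positivity)]
  · rw [not_le] at hSk
    have ha : 0 ≤ a := by
      by_contra! ha
      nlinarith [abs_nonneg (partialSum X k ω), (Nat.cast_pos.2 hk : (0 : ℝ) < k)]
    have hstep : partialSum X (k + 1) ω = partialSum X k ω + X k ω := sum_range_succ _ _
    have hSk1 : a * (k + 1 : ℕ) ≤ |partialSum X (k + 1) ω| := by
      have hjump : |X k ω| ≤ |partialSum X k ω + X k ω| + |partialSum X k ω| := by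
        simpa using abs_add_le (partialSum X k ω + X k ω) (-partialSum X k ω)
      rw [hstep]
      push_cast
      linarith
    refine le_trans (by exact_mod_cast k.le_succ) (le_lastDev (Nat.succ_pos k) ?_)
    rwa [abs_div, Nat.abs_cast, le_div_iff₀ (by positivity)]

lemma eventually_tsum_measure_le_two_mul_measure_lt_lastDev [MeasurableSpace Ω] {μ : Measure Ω}
    (hX : ∀ i, Measurable (X i)) (hindep : iIndepFun X μ)
    (hfin : ∀ᵐ ω ∂μ, lastDev X 1 ω ≠ ⊤) :
    ∀ᶠ n : ℕ in atTop, ∑' j, μ (X (n + 1 + j) ⁻¹' {x | ((n + 1 + j : ℕ) + 1 : ℝ) ≤ |x| / 2})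
      ≤ 2 * μ {ω | (n : ℕ∞) < lastDev X 1 ω} := by
  have := hindep.isProbabilityMeasure
  filter_upwards [(tendsto_measure_lt_atTop_zero (measurableSet_lt_lastDev hX 1) hfin).eventually
    (ge_mem_nhds (by norm_num : (0 : ℝ≥0∞) < 1 / 4))] with n hn
  have hsub : ⋃ j, X (n + 1 + j) ⁻¹' {x | ((n + 1 + j : ℕ) + 1 : ℝ) ≤ |x| / 2}
      ⊆ {ω | (n : ℕ∞) < lastDev X 1 ω} := Set.iUnion_subset fun j ω hω => by
    have hjump := le_lastDev_of_two_mul_le_abs (X := X) (a := 1) (ω := ω) (k := n + 1 + j)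
      (by simp only [Set.mem_preimage, Set.mem_ofPred_eq] at hω; linarith)
    exact lt_of_lt_of_le (by exact_mod_cast (by omega : n < n + 1 + j)) hjump
  calc _ ≤ 2 * μ (⋃ j, X (n + 1 + j) ⁻¹' {x | ((n + 1 + j : ℕ) + 1 : ℝ) ≤ |x| / 2}) :=
        (hindep.precomp (add_right_injective (n + 1))).tsum_measure_preimage_le_two_mul
          (fun j => hX _) (fun j => measurableSet_le measurable_const (by fun_prop))
          ((measure_mono hsub).trans hn)
    _ ≤ _ := by gcongr

end LastDeviation

theorem stmt3_general {Ω : Type*} [MeasurableSpace Ω] (μ : Measure Ω) [IsProbabilityMeasure μ]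
    (X : Ω → ℝ) (Xs : ℕ → Ω → ℝ)
    (hX : Measurable X) (hXs : ∀ n, Measurable (Xs n))
    (hindep : iIndepFun Xs μ)
    (hident : ∀ n, IdentDistrib (Xs n) X μ μ)
    (hint : Integrable X μ)
    (G : ℝ → ℝ) (hG : Moderate G)
    (hL : ∀ a > (0 : ℝ), (∀ᵐ ω ∂μ, lastDev Xs a ω ≠ ⊤) ∧
      ∫⁻ ω, evalG G (lastDev Xs a ω) ∂μ < ⊤) :
    ∫⁻ ω, ENNReal.ofReal (|X ω| * G |X ω|) ∂μ < ⊤ := by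
  obtain ⟨hfin, hGL⟩ := hL 1 one_pos
  set q : ℕ → ℝ≥0∞ := fun k => μ {ω | (k + 1 : ℝ) ≤ |X ω| / 2}
  have hY : Measurable fun ω => |X ω| / 2 := hX.abs.div_const 2
  have hY₀ : ∀ ω, 0 ≤ |X ω| / 2 := fun ω => by positivity
  have hq : ∑' k, q k ≠ ∞ := ne_top_of_le_ne_top ((hint.abs.div_const 2).lintegral_lt_top.ne)
    (tsum_measure_add_one_le_le_lintegral μ hY hY₀)
  have htail : ∀ᶠ n in atTop, ∑' j, q (n + 1 + j) ≤ 2 * μ {ω | (n : ℕ∞) < lastDev Xs 1 ω} := by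
    filter_upwards [eventually_tsum_measure_le_two_mul_measure_lt_lastDev hXs hindep hfin]
      with n hn
    convert hn using 3 with j
    exact ((hident _).measure_mem_eq
      (measurableSet_le measurable_const (measurable_abs.div_const 2))).symm
  have hu : ∑' n : ℕ, ENNReal.ofReal (G (n + 1) - G n) * (2 * μ {ω | (n : ℕ∞) < lastDev Xs 1 ω})
      ≠ ∞ := by
    simp_rw [mul_left_comm _ (2 : ℝ≥0∞), ENNReal.tsum_mul_left]
    exact ENNReal.mul_ne_top ENNReal.ofNat_ne_top (ne_top_of_le_ne_top hGL.ne
      (tsum_mul_measure_lt_le_lintegral_evalG μ (measurableSet_lt_lastDev hXs 1) hG.2.1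
        (hG.1 0 le_rfl).le))
  have hqG := tsum_ofReal_mul_ne_top_of_tail_le hG.2.1 hq htail hu
  rw [tsum_mul_measure_add_one_le_eq_lintegral μ hY hY₀] at hqG
  exact hG.lintegral_ofReal_mul_lt_top μ (fun ω => abs_nonneg (X ω)) hqG

theorem stmt3 {Ω : Type*} [MeasurableSpace Ω] (μ : Measure Ω) [IsProbabilityMeasure μ]
    (X : Ω → ℝ) (Xs : ℕ → Ω → ℝ)
    (hX : Measurable X) (hXs : ∀ n, Measurable (Xs n))
    (hindep : iIndepFun Xs μ)
    (hident : ∀ n, IdentDistrib (Xs n) X μ μ)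
    (hint : Integrable X μ) (hcent : μ[X] = 0)
    (G : ℝ → ℝ) (hG : Moderate G)
    (hL : ∀ a > (0 : ℝ), (∀ᵐ ω ∂μ, lastDev Xs a ω ≠ ⊤) ∧
      ∫⁻ ω, evalG G (lastDev Xs a ω) ∂μ < ⊤) :
    ∫⁻ ω, ENNReal.ofReal (|X ω| * G |X ω|) ∂μ < ⊤ :=
  stmt3_general μ X Xs hX hXs hindep hident hint G hG hL
end

section
/- Let G be a moderate function. Then there exists an integer p ≥ 1 such that Σ_{n≥1} G(n)·n^{-(p+1)} < ∞, and there exists a constant c > 0 such that the function H := c·G satisfies H(n) ≥ n^p · Σ_{k≥n} G(k)·k^{-(p+1)} for every n ≥ 1. -/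
open MeasureTheory ProbabilityTheory ENNReal

/-! Split the tail `∑_{k ≥ n} G(k)/k^(p+1)` into the dyadic blocks `[2^j n, 2^(j+1) n)`.
By monotonicity and `j + 1` applications of the doubling bound `G(2t) ≤ C G(t)`, the `j`-th block
is at most `(C/2^p)^j · C G(n)/n^p`, so once `C < 2^p` the tail is dominated by a geometric series
and `n^p` times it is at most `C (1 - C/2^p)⁻¹ G(n)`. All sums are taken in `ℝ≥0∞`, where they
need no summability side conditions. -/

open Finset Filter

section DyadicBlocks

variable (f : ℕ → ℝ≥0∞)

theorem tsum_ge_eq_iSup_sum_Ico (n : ℕ) {N : ℕ → ℕ} (hN : Tendsto N atTop atTop) :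
    ∑' k : {k // n ≤ k}, f k = ⨆ M, ∑ k ∈ Ico n (N M), f k := by
  rw [show (∑' k : {k // n ≤ k}, f k) = ∑' k : Set.Ici n, f k from rfl, _root_.tsum_subtype,
    ENNReal.tsum_eq_iSup_nat' hN]
  refine iSup_congr fun M => ?_
  rw [sum_indicator_eq_sum_filter, range_eq_Ico]
  simp only [Set.mem_Ici, Ico_filter_le, zero_max]

theorem sum_Ico_two_pow_mul_eq_sum_range (n M : ℕ) :
    ∑ k ∈ Ico n (2 ^ M * n), f k = ∑ j ∈ range M, ∑ k ∈ Ico (2 ^ j * n) (2 ^ (j + 1) * n), f k := by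
  induction M with
  | zero => simp
  | succ M ih =>
    rw [sum_range_succ, ← ih, sum_Ico_consecutive _ (Nat.le_mul_of_pos_left n (Nat.two_pow_pos M))
      (Nat.mul_le_mul_right n (Nat.pow_le_pow_right two_pos M.le_succ))]

theorem tsum_ge_eq_tsum_sum_Ico_two_pow_mul {n : ℕ} (hn : n ≠ 0) :
    ∑' k : {k // n ≤ k}, f k = ∑' j, ∑ k ∈ Ico (2 ^ j * n) (2 ^ (j + 1) * n), f k := by
  have hN : Tendsto (fun M => 2 ^ M * n) atTop atTop :=
    tendsto_atTop_mono (fun M => Nat.lt_two_pow_self.le.trans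
      (Nat.le_mul_of_pos_right _ (Nat.pos_of_ne_zero hn))) tendsto_id
  simp only [tsum_ge_eq_iSup_sum_Ico f n hN, sum_Ico_two_pow_mul_eq_sum_range,
    ENNReal.tsum_eq_iSup_nat]

end DyadicBlocks

theorem sum_Ico_two_mul_div_pow_le {g : ℕ → ℝ≥0∞} (hg : Monotone g) (m p : ℕ) :
    ∑ k ∈ Ico m (2 * m), g k / (k : ℝ≥0∞) ^ (p + 1) ≤ g (2 * m) / (m : ℝ≥0∞) ^ p := by
  rcases Nat.eq_zero_or_pos m with rfl | hm
  · simp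
  have hterm : ∀ k ∈ Ico m (2 * m),
      g k / (k : ℝ≥0∞) ^ (p + 1) ≤ g (2 * m) / (m : ℝ≥0∞) ^ (p + 1) :=
    fun k hk => ENNReal.div_le_div (hg (mem_Ico.1 hk).2.le)
      (pow_le_pow_left₀ zero_le (Nat.cast_le.2 (mem_Ico.1 hk).1) _)
  have hm0 : (m : ℝ≥0∞) ≠ 0 := Nat.cast_ne_zero.2 hm.ne'
  calc ∑ k ∈ Ico m (2 * m), g k / (k : ℝ≥0∞) ^ (p + 1)
      ≤ m * (g (2 * m) / (m : ℝ≥0∞) ^ (p + 1)) := by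
        simpa [two_mul] using sum_le_card_nsmul _ _ _ hterm
    _ = g (2 * m) / (m : ℝ≥0∞) ^ p := by
        rw [pow_succ', ← mul_div_assoc, ENNReal.mul_div_mul_left _ _ hm0 (natCast_ne_top m)]

theorem apply_two_pow_mul_le_pow_mul {g : ℕ → ℝ≥0∞} {C : ℝ≥0∞} (hC : ∀ k, g (2 * k) ≤ C * g k)
    (j k : ℕ) : g (2 ^ j * k) ≤ C ^ j * g k := by
  induction j with
  | zero => simp
  | succ j ih =>
    calc g (2 ^ (j + 1) * k) = g (2 * (2 ^ j * k)) := by rw [pow_succ', mul_assoc]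
      _ ≤ C * (C ^ j * g k) := (hC _).trans (mul_le_mul_right ih C)
      _ = C ^ (j + 1) * g k := by rw [pow_succ', mul_assoc]

theorem pow_mul_tsum_ge_div_pow_succ_le {g : ℕ → ℝ≥0∞} (hg : Monotone g) {C : ℝ≥0∞}
    (hC : ∀ k, g (2 * k) ≤ C * g k) (p : ℕ) {n : ℕ} (hn : n ≠ 0) :
    (n : ℝ≥0∞) ^ p * ∑' k : {k // n ≤ k}, g k / (k : ℝ≥0∞) ^ (p + 1)
      ≤ C * (1 - C / 2 ^ p)⁻¹ * g n := by
  set r := C / 2 ^ p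
  set A := C * g n / (n : ℝ≥0∞) ^ p
  have hnp0 : (n : ℝ≥0∞) ^ p ≠ 0 := pow_ne_zero _ (Nat.cast_ne_zero.2 hn)
  have hnp_top : (n : ℝ≥0∞) ^ p ≠ ⊤ := pow_ne_top (natCast_ne_top n)
  have hblock (j : ℕ) :
      ∑ k ∈ Ico (2 ^ j * n) (2 ^ (j + 1) * n), g k / (k : ℝ≥0∞) ^ (p + 1) ≤ r ^ j * A := by
    calc ∑ k ∈ Ico (2 ^ j * n) (2 ^ (j + 1) * n), g k / (k : ℝ≥0∞) ^ (p + 1)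
        ≤ g (2 * (2 ^ j * n)) / ((2 ^ j * n : ℕ) : ℝ≥0∞) ^ p := by
          rw [pow_succ', mul_assoc]
          exact sum_Ico_two_mul_div_pow_le hg _ p
      _ ≤ C ^ (j + 1) * g n / ((2 ^ p) ^ j * (n : ℝ≥0∞) ^ p) := by
          rw [← mul_assoc, ← pow_succ']
          push_cast
          rw [mul_pow, ← pow_mul, mul_comm j p, pow_mul]
          exact ENNReal.div_le_div_right (apply_two_pow_mul_le_pow_mul hC _ _) _
      _ = r ^ j * A := by
          simp only [r, A, div_eq_mul_inv, mul_pow, ENNReal.inv_pow,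
            ENNReal.mul_inv (.inl (pow_ne_zero _ (pow_ne_zero _ two_ne_zero))) (.inr hnp0)]
          ring
  have htail : ∑' k : {k // n ≤ k}, g k / (k : ℝ≥0∞) ^ (p + 1) ≤ ∑' j, r ^ j * A :=
    (tsum_ge_eq_tsum_sum_Ico_two_pow_mul _ hn).trans_le (ENNReal.tsum_le_tsum hblock)
  calc (n : ℝ≥0∞) ^ p * ∑' k : {k // n ≤ k}, g k / (k : ℝ≥0∞) ^ (p + 1)
      ≤ (n : ℝ≥0∞) ^ p * ((1 - r)⁻¹ * A) := by
        rw [← ENNReal.tsum_geometric, ← ENNReal.tsum_mul_right]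
        exact mul_le_mul_right htail _
    _ = C * (1 - r)⁻¹ * g n := by
        rw [mul_left_comm, ENNReal.mul_div_cancel hnp0 hnp_top]
        ring

namespace Moderate

variable {G : ℝ → ℝ}

theorem monotone_ofReal_natCast (hG : Moderate G) : Monotone fun k : ℕ => ENNReal.ofReal (G k) :=
  fun a b hab => ofReal_le_ofReal <|
    hG.2.1 (Set.mem_Ici.2 a.cast_nonneg) (Set.mem_Ici.2 b.cast_nonneg) (Nat.cast_le.2 hab)

theorem exists_ofReal_natCast_two_mul_le (hG : Moderate G) :
    ∃ C : ℝ≥0∞, C ≠ 0 ∧ C ≠ ⊤ ∧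
      ∀ k : ℕ, ENNReal.ofReal (G ↑(2 * k)) ≤ C * ENNReal.ofReal (G k) := by
  obtain ⟨hpos, -, -, c, hc⟩ := hG
  have hc0 : 0 < c := pos_of_mul_pos_left ((hpos 0 le_rfl).trans_le (by simpa using hc 0 le_rfl))
    (hpos 0 le_rfl).le
  refine ⟨ENNReal.ofReal c, ofReal_pos.2 hc0 |>.ne', ofReal_ne_top, fun k => ?_⟩
  rw [← ofReal_mul hc0.le, Nat.cast_mul, Nat.cast_two]
  exact ofReal_le_ofReal (hc k k.cast_nonneg)

end Moderate

theorem exists_one_le_lt_two_pow {C : ℝ≥0∞} (hC : C ≠ ⊤) : ∃ p : ℕ, 1 ≤ p ∧ C < 2 ^ p := by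
  obtain ⟨N, hN⟩ := ENNReal.exists_nat_gt hC
  refine ⟨N + 1, N.succ_pos, hN.trans ?_⟩
  exact_mod_cast (Nat.lt_two_pow_self).trans (Nat.pow_lt_pow_right one_lt_two N.lt_succ_self)

theorem stmt7 (G : ℝ → ℝ) (hG : Moderate G) :
    ∃ p : ℕ, 1 ≤ p ∧
      (∑' n : {n : ℕ // 1 ≤ n},
        ENNReal.ofReal (G (n : ℕ)) / ((n : ℕ) : ℝ≥0∞) ^ (p + 1) < ⊤) ∧
      ∃ c : ℝ, 0 < c ∧ ∀ n : ℕ, 1 ≤ n →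
        (n : ℝ≥0∞) ^ p *
          ∑' k : {k : ℕ // n ≤ k}, ENNReal.ofReal (G (k : ℕ)) / ((k : ℕ) : ℝ≥0∞) ^ (p + 1)
        ≤ ENNReal.ofReal (c * G n) := by
  obtain ⟨C, hC0, hCtop, hdouble⟩ := hG.exists_ofReal_natCast_two_mul_le
  obtain ⟨p, hp1, hCp⟩ := exists_one_le_lt_two_pow hCtop
  set K := C * (1 - C / 2 ^ p)⁻¹
  have hK0 : K ≠ 0 := mul_ne_zero hC0 (ENNReal.inv_ne_zero.2 (sub_ne_top one_ne_top))
  have hr : C / 2 ^ p < 1 := ENNReal.div_lt_of_lt_mul (by rwa [one_mul])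
  have hKtop : K ≠ ⊤ := mul_ne_top hCtop (ENNReal.inv_ne_top.2 (tsub_pos_of_lt hr).ne')
  have htail (n : ℕ) (hn : 1 ≤ n) :=
    pow_mul_tsum_ge_div_pow_succ_le hG.monotone_ofReal_natCast hdouble p (n := n) (by omega)
  refine ⟨p, hp1, ?_, K.toReal, toReal_pos hK0 hKtop, fun n hn => ?_⟩
  · simpa using (htail 1 le_rfl).trans_lt (mul_lt_top hKtop.lt_top ofReal_lt_top)
  · rw [ofReal_mul toReal_nonneg, ofReal_toReal hKtop]
    exact htail n hn
end

section
/- Let G be a moderate function, let X be a real random variable, let X' be an independent copy of X, and set X* := X − X'. Then |X|·G(|X|) is integrable if and only if |X*|·G(|X*|) is integrable. -/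
open MeasureTheory ProbabilityTheory ENNReal

/-
Put `φ(x) = |x| G(|x|)`. Since `t ↦ t G(t)` is non-decreasing on `[0, ∞)` and `G(2t) ≤ c G(t)`,
`φ` is quasi-subadditive: `|x| ≤ |y| + |z|` implies `φ(x) ≤ 2c (φ(y) + φ(z))`.
With `|X - X'| ≤ |X| + |X'|` this gives `E φ(X*) ≤ 4c E φ(X)`. Conversely, by Tonelli and
independence `E φ(X*) = ∫ E φ(X - y) dP_{X'}(y)`, so `E φ(X - y) < ∞` for some `y`, and
`|X| ≤ |X - y| + |y|` gives `E φ(X) ≤ 2c (E φ(X - y) + φ(y)) < ∞`.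
-/

namespace Moderate

variable {G : ℝ → ℝ}

theorem nonneg (hG : Moderate G) {t : ℝ} (ht : 0 ≤ t) : 0 ≤ G t :=
  (hG.1 t ht).le

theorem monotoneOn (hG : Moderate G) : MonotoneOn G (Set.Ici 0) :=
  hG.2.1

theorem measurable_comp_abs (hG : Moderate G) : Measurable fun x => G |x| := by
  have hmono : Monotone fun t => G (max t 0) := fun a b hab =>
    hG.monotoneOn (le_max_right a 0) (le_max_right b 0) (max_le_max_right 0 hab)
  have hcomp : (fun x => G |x|) = (fun t => G (max t 0)) ∘ abs := by
    funext x
    simp only [Function.comp_apply, max_eq_left (abs_nonneg x)]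
  exact hcomp ▸ hmono.measurable.comp measurable_abs

theorem monotoneOn_mul_self (hG : Moderate G) : MonotoneOn (fun t => t * G t) (Set.Ici 0) :=
  fun _ ha _ _ hab => mul_le_mul hab (hG.monotoneOn ha (le_trans ha hab) hab) (hG.nonneg ha)
    (le_trans ha hab)

theorem exists_mul_abs_le_add (hG : Moderate G) :
    ∃ C : NNReal, ∀ x y z : ℝ, |x| ≤ |y| + |z| →
      |x| * G |x| ≤ C * (|y| * G |y| + |z| * G |z|) := by
  obtain ⟨c, hc⟩ := hG.2.2.2
  have hc0 : 0 ≤ c := by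
    have h := hc 0 le_rfl
    rw [mul_zero] at h
    nlinarith [hG.1 0 le_rfl]
  refine ⟨⟨2 * c, by positivity⟩, fun x y z hxyz => ?_⟩
  set m := max |y| |z|
  have hm : 0 ≤ m := (abs_nonneg y).trans (le_max_left _ _)
  have hfm : m * G m ≤ |y| * G |y| + |z| * G |z| := by
    have hy := mul_nonneg (abs_nonneg y) (hG.nonneg (abs_nonneg y))
    have hz := mul_nonneg (abs_nonneg z) (hG.nonneg (abs_nonneg z))
    rcases max_choice |y| |z| with h | h <;> simp only [m, h] <;> linarith
  calc |x| * G |x| ≤ (2 * m) * G (2 * m) :=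
        hG.monotoneOn_mul_self (abs_nonneg x) (by positivity : (0 : ℝ) ≤ 2 * m)
          (hxyz.trans (by linarith [le_max_left |y| |z|, le_max_right |y| |z|]))
    _ ≤ (2 * m) * (c * G m) := mul_le_mul_of_nonneg_left (hc m hm) (by positivity)
    _ = 2 * c * (m * G m) := by ring
    _ ≤ 2 * c * (|y| * G |y| + |z| * G |z|) := mul_le_mul_of_nonneg_left hfm (by positivity)

theorem exists_ofReal_mul_abs_le_add (hG : Moderate G) :
    ∃ C : NNReal, ∀ x y z : ℝ, |x| ≤ |y| + |z| →
      ENNReal.ofReal (|x| * G |x|) ≤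
        C * (ENNReal.ofReal (|y| * G |y|) + ENNReal.ofReal (|z| * G |z|)) := by
  obtain ⟨C, hC⟩ := hG.exists_mul_abs_le_add
  refine ⟨C, fun x y z hxyz => ?_⟩
  rw [← ENNReal.ofReal_coe_nnreal, ← ENNReal.ofReal_add
    (mul_nonneg (abs_nonneg y) (hG.nonneg (abs_nonneg y)))
    (mul_nonneg (abs_nonneg z) (hG.nonneg (abs_nonneg z))), ← ENNReal.ofReal_mul C.coe_nonneg]
  exact ENNReal.ofReal_le_ofReal (hC x y z hxyz)

end Moderate

theorem ProbabilityTheory.IndepFun.exists_lintegral_lt_top {Ω α β : Type*} [MeasurableSpace Ω]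
    [MeasurableSpace α] [MeasurableSpace β] {μ : Measure Ω} [IsFiniteMeasure μ] [NeZero μ]
    {X : Ω → α} {Y : Ω → β} (hXY : IndepFun X Y μ) (hX : Measurable X) (hY : Measurable Y)
    {F : α → β → ℝ≥0∞} (hF : Measurable (Function.uncurry F))
    (h : ∫⁻ ω, F (X ω) (Y ω) ∂μ < ∞) : ∃ y, ∫⁻ ω, F (X ω) y ∂μ < ∞ := by
  have hiter : ∫⁻ ω, F (X ω) (Y ω) ∂μ = ∫⁻ y, ∫⁻ x, F x y ∂μ.map X ∂μ.map Y := by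
    have h := lintegral_map (μ := μ) hF (hX.prodMk hY)
    rw [(indepFun_iff_map_prod_eq_prod_map_map hX.aemeasurable hY.aemeasurable).1 hXY,
      lintegral_prod_symm' _ hF] at h
    exact h.symm
  have hae : ∀ᵐ y ∂μ.map Y, ∫⁻ x, F x y ∂μ.map X < ∞ :=
    ae_lt_top' hF.lintegral_prod_left.aemeasurable (hiter ▸ h).ne
  have : NeZero (μ.map Y) := ⟨(Measure.map_ne_zero_iff hY.aemeasurable).2 (NeZero.ne μ)⟩
  obtain ⟨y, hy⟩ := hae.exists
  exact ⟨y, (lintegral_map (hF.comp measurable_prodMk_right) hX).symm.trans_lt hy⟩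

theorem lintegral_lt_top_of_le_const_mul_add {Ω : Type*} [MeasurableSpace Ω] {μ : Measure Ω}
    {u v w : Ω → ℝ≥0∞} {C : ℝ≥0∞} (hC : C ≠ ∞) (hv : AEMeasurable v μ)
    (h : ∀ ω, u ω ≤ C * (v ω + w ω)) (hv_lt : ∫⁻ ω, v ω ∂μ < ∞)
    (hw_lt : ∫⁻ ω, w ω ∂μ < ∞) : ∫⁻ ω, u ω ∂μ < ∞ :=
  calc ∫⁻ ω, u ω ∂μ ≤ ∫⁻ ω, C * (v ω + w ω) ∂μ := lintegral_mono h
    _ = C * (∫⁻ ω, v ω ∂μ + ∫⁻ ω, w ω ∂μ) := by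
      rw [lintegral_const_mul' _ _ hC, lintegral_add_left' hv]
    _ < ∞ := ENNReal.mul_lt_top hC.lt_top (ENNReal.add_lt_top.2 ⟨hv_lt, hw_lt⟩)

theorem stmt9 {Ω : Type*} [MeasurableSpace Ω] (μ : Measure Ω) [IsProbabilityMeasure μ]
    (G : ℝ → ℝ) (hG : Moderate G)
    (X X' : Ω → ℝ) (hX : Measurable X) (hX' : Measurable X')
    (hindep : IndepFun X X' μ) (hcopy : IdentDistrib X' X μ μ) :
    (∫⁻ ω, ENNReal.ofReal (|X ω| * G |X ω|) ∂μ < ⊤) ↔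
      (∫⁻ ω, ENNReal.ofReal (|X ω - X' ω| * G |X ω - X' ω|) ∂μ < ⊤) := by
  set Φ : ℝ → ℝ≥0∞ := fun x => ENNReal.ofReal (|x| * G |x|)
  have hΦ : Measurable Φ :=
    (measurable_abs.mul hG.measurable_comp_abs).ennreal_ofReal
  obtain ⟨C, hΦ_le⟩ := hG.exists_ofReal_mul_abs_le_add
  constructor
  · intro hI
    have hI' : ∫⁻ ω, Φ (X' ω) ∂μ < ∞ := (hcopy.comp hΦ).lintegral_eq.trans_lt hI
    exact lintegral_lt_top_of_le_const_mul_add ENNReal.coe_ne_top (hΦ.comp hX).aemeasurable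
      (fun ω => hΦ_le _ _ _ (abs_sub _ _)) hI hI'
  · intro hJ
    obtain ⟨y, hy⟩ := hindep.exists_lintegral_lt_top (F := fun x y => Φ (x - y)) hX hX'
      (hΦ.comp measurable_sub) hJ
    refine lintegral_lt_top_of_le_const_mul_add ENNReal.coe_ne_top
      (hΦ.comp (hX.sub_const y)).aemeasurable
      (fun ω => hΦ_le _ _ y (sub_le_iff_le_add.1 (abs_sub_abs_le_abs_sub _ _))) hy ?_
    rw [lintegral_const, measure_univ, mul_one]
    exact ENNReal.ofReal_lt_top
end

section
/- Let X and (X_n)_{n≥1} be i.i.d. real random variables, let σ_n := Σ_{k≥n} P[|X| ≥ k] (assumed finite), and let E_n := {∃ k ≥ n : |X_k| ≥ k}. Then σ_n·(1 − σ_{n+1}) ≤ P[E_n] ≤ σ_n for every n ≥ 1. -/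
open MeasureTheory ProbabilityTheory ENNReal

/-!
The upper bound is the union bound. For the lower bound, split `E_n` according to the last
index `k ≥ n` with `|X_k| ≥ k`: the event "`k` is the last such index" has probability at least
`P[|X| ≥ k] - Σ_{j > k} P[|X| ≥ k] P[|X| ≥ j] ≥ P[|X| ≥ k] (1 - σ_{n+1})`, by pairwise
independence, and these events are disjoint.
-/

lemma ENNReal.tsum_tail_antitone (f : ℕ → ℝ≥0∞) :
    Antitone fun n => ∑' k : {k : ℕ // n ≤ k}, f k :=
  fun _ _ hmn => ENNReal.tsum_mono_subtype f (s := {k | _ ≤ k}) (t := {k | _ ≤ k})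
    fun _ hk => le_trans hmn hk

namespace MeasureTheory

variable {Ω : Type*}

def lastOccurrence (A : ℕ → Set Ω) (k : ℕ) : Set Ω :=
  A k \ ⋃ j : {j : ℕ // k + 1 ≤ j}, A j

lemma pairwise_disjoint_lastOccurrence (A : ℕ → Set Ω) :
    Pairwise (Function.onFun Disjoint (lastOccurrence A)) := by
  have key : ∀ k l, k < l → Disjoint (lastOccurrence A k) (lastOccurrence A l) :=
    fun k l hkl => Set.disjoint_left.2 fun _ hk hl => hk.2 (Set.mem_iUnion.2 ⟨⟨l, hkl⟩, hl.1⟩)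
  intro k l hkl
  rcases lt_or_gt_of_ne hkl with h | h
  · exact key k l h
  · exact (key l k h).symm

variable [MeasurableSpace Ω] {μ : Measure Ω} {A : ℕ → Set Ω}

lemma measure_mul_one_sub_tail_le_measure_lastOccurrence [IsFiniteMeasure μ]
    (hpair : ∀ j k, j ≠ k → μ (A j ∩ A k) = μ (A j) * μ (A k)) (k : ℕ) :
    μ (A k) * (1 - ∑' j : {j : ℕ // k + 1 ≤ j}, μ (A j)) ≤ μ (lastOccurrence A k) := by
  set U := ⋃ j : {j : ℕ // k + 1 ≤ j}, A j
  have hinter : μ (A k ∩ U) ≤ μ (A k) * ∑' j : {j : ℕ // k + 1 ≤ j}, μ (A j) := by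
    rw [Set.inter_iUnion, ← ENNReal.tsum_mul_left]
    refine (measure_iUnion_le _).trans_eq (tsum_congr fun j => hpair k j ?_)
    have := j.2
    omega
  calc μ (A k) * (1 - ∑' j : {j : ℕ // k + 1 ≤ j}, μ (A j))
      = μ (A k) - μ (A k) * ∑' j : {j : ℕ // k + 1 ≤ j}, μ (A j) := by
        rw [ENNReal.mul_sub fun _ _ => measure_ne_top μ _, mul_one]
    _ ≤ μ (A k) - μ (A k ∩ U) := tsub_le_tsub_left hinter _
    _ ≤ μ (A k \ (A k ∩ U)) := le_measure_sdiff
    _ = μ (lastOccurrence A k) := by rw [Set.sdiff_self_inter, lastOccurrence]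

lemma tail_sum_mul_one_sub_le_measure_iUnion [IsFiniteMeasure μ] (hA : ∀ k, MeasurableSet (A k))
    (hpair : ∀ j k, j ≠ k → μ (A j ∩ A k) = μ (A j) * μ (A k)) (n : ℕ) :
    (∑' k : {k : ℕ // n ≤ k}, μ (A k)) * (1 - ∑' k : {k : ℕ // n + 1 ≤ k}, μ (A k)) ≤
      μ (⋃ k : {k : ℕ // n ≤ k}, A k) := by
  have hlast : ∀ k, MeasurableSet (lastOccurrence A k) :=
    fun k => (hA k).diff (.iUnion fun j => hA j)
  calc (∑' k : {k : ℕ // n ≤ k}, μ (A k)) * (1 - ∑' k : {k : ℕ // n + 1 ≤ k}, μ (A k))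
      = ∑' k : {k : ℕ // n ≤ k}, μ (A k) * (1 - ∑' j : {j : ℕ // n + 1 ≤ j}, μ (A j)) :=
        ENNReal.tsum_mul_right.symm
    _ ≤ ∑' k : {k : ℕ // n ≤ k}, μ (lastOccurrence A k) := by
        refine ENNReal.tsum_le_tsum fun k => le_trans ?_
          (measure_mul_one_sub_tail_le_measure_lastOccurrence hpair k)
        gcongr
        exact ENNReal.tsum_tail_antitone (fun j => μ (A j)) (Nat.succ_le_succ k.2)
    _ = μ (⋃ k : {k : ℕ // n ≤ k}, lastOccurrence A k) :=
        (measure_iUnion ((pairwise_disjoint_lastOccurrence A).comp_of_injective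
          Subtype.val_injective) fun k => hlast k.1).symm
    _ ≤ μ (⋃ k : {k : ℕ // n ≤ k}, A k) :=
        measure_mono (Set.iUnion_mono fun _ => Set.sdiff_subset)

end MeasureTheory

theorem stmt12_general {Ω : Type*} [MeasurableSpace Ω] (μ : Measure Ω) [IsProbabilityMeasure μ]
    (X : Ω → ℝ) (Xs : ℕ → Ω → ℝ)
    (hXs : ∀ n, Measurable (Xs n))
    (hindep : iIndepFun Xs μ)
    (hident : ∀ n, IdentDistrib (Xs n) X μ μ)
    (σ : ℕ → ℝ≥0∞)
    (hσ : ∀ n, σ n = ∑' k : {k : ℕ // n ≤ k}, μ {ω | ((k : ℕ) : ℝ) ≤ |X ω|}) :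
    ∀ n : ℕ, 1 ≤ n →
      σ n * (1 - σ (n + 1)) ≤ μ {ω | ∃ k, n ≤ k ∧ (k : ℝ) ≤ |Xs k ω|} ∧
      μ {ω | ∃ k, n ≤ k ∧ (k : ℝ) ≤ |Xs k ω|} ≤ σ n := by
  set T : ℕ → Set ℝ := fun k => {x | (k : ℝ) ≤ |x|}
  have hT : ∀ k, MeasurableSet (T k) := fun k => measurableSet_le measurable_const measurable_abs
  set A : ℕ → Set Ω := fun k => Xs k ⁻¹' T k
  have hσA : ∀ m, σ m = ∑' k : {k : ℕ // m ≤ k}, μ (A k) := fun m => by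
    rw [hσ m]
    exact tsum_congr fun k => ((hident k).measure_mem_eq (hT k)).symm
  have hpair : ∀ j k, j ≠ k → μ (A j ∩ A k) = μ (A j) * μ (A k) := fun j k hjk =>
    (hindep.indepFun hjk).measure_inter_preimage_eq_mul _ _ (hT j) (hT k)
  intro n _
  have hE : {ω | ∃ k, n ≤ k ∧ (k : ℝ) ≤ |Xs k ω|} = ⋃ k : {k : ℕ // n ≤ k}, A k := by
    ext ω
    simp [A, T]
  rw [hE, hσA n, hσA (n + 1)]
  exact ⟨tail_sum_mul_one_sub_le_measure_iUnion (fun k => hXs k (hT k)) hpair n,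
    measure_iUnion_le _⟩

theorem stmt12 {Ω : Type*} [MeasurableSpace Ω] (μ : Measure Ω) [IsProbabilityMeasure μ]
    (X : Ω → ℝ) (Xs : ℕ → Ω → ℝ)
    (hX : Measurable X) (hXs : ∀ n, Measurable (Xs n))
    (hindep : iIndepFun Xs μ)
    (hident : ∀ n, IdentDistrib (Xs n) X μ μ)
    (σ : ℕ → ℝ≥0∞)
    (hσ : ∀ n, σ n = ∑' k : {k : ℕ // n ≤ k}, μ {ω | ((k : ℕ) : ℝ) ≤ |X ω|})
    (hfin : ∀ n, 1 ≤ n → σ n ≠ ⊤) :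
    ∀ n : ℕ, 1 ≤ n →
      σ n * (1 - σ (n + 1)) ≤ μ {ω | ∃ k, n ≤ k ∧ (k : ℝ) ≤ |Xs k ω|} ∧
      μ {ω | ∃ k, n ≤ k ∧ (k : ℝ) ≤ |Xs k ω|} ≤ σ n :=
  stmt12_general μ X Xs hXs hindep hident σ hσ
end

section
/- Let (X_n)_{n≥1} be i.i.d. symmetric real random variables with partial sums S_n := X_1 + ⋯ + X_n. Then for every integer i ≥ 0, P[ max_{2^i ≤ n < 2^{i+1}} |S_n| ≥ 2^i ] ≤ 3·P[ |S_{2^{i+1}}| ≥ 2^{i-1} ]. -/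
open MeasureTheory ProbabilityTheory ENNReal

/-
Lévy's reflection principle. Let `τ` be the first index with `|S_τ| ≥ a`. Flipping the signs of
the increments after `τ` preserves the joint law of the (independent, symmetric) increments, does
not change `S_1, …, S_τ`, and turns `S_N` into `2 S_τ - S_N`. Since `|S_N| + |2 S_τ - S_N| ≥ 2a`,
on `{τ = n}` at least one of them is `≥ a`, and both alternatives have the same probability; hence
`P[max_{n ≤ N} |S_n| ≥ a] ≤ 2 P[|S_N| ≥ a]`. Apply this with `a = 2^i`, `N = 2^(i+1)`.

The event `{τ = n}` is `disjointed (exceedSet Z a) n`.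
-/

lemma Set.preimage_disjointed {α β ι : Type*} [Preorder ι] [LocallyFiniteOrderBot ι]
    (f : α → β) (s : ι → Set β) (i : ι) :
    f ⁻¹' disjointed s i = disjointed (fun j => f ⁻¹' s j) i := by
  ext
  simp [disjointed_eq_inter_compl]

lemma disjointed_congr {α ι : Type*} [GeneralizedBooleanAlgebra α] [Preorder ι]
    [LocallyFiniteOrderBot ι] {s t : ι → α} {i : ι} (h : ∀ j ≤ i, s j = t j) :
    disjointed s i = disjointed t i := by
  simp only [disjointed_apply, h i le_rfl]
  congr 1
  exact Finset.sup_congr rfl fun j hj => h j (Finset.mem_Iio.1 hj).le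

lemma le_abs_or_le_abs_two_mul_sub {a s t : ℝ} (h : a ≤ |s|) : a ≤ |t| ∨ a ≤ |2 * s - t| := by
  by_contra! hlt
  have := abs_add_le t (2 * s - t)
  rw [add_sub_cancel, abs_mul, abs_two] at this
  linarith [hlt.1, hlt.2]

namespace ProbabilityTheory

section

variable {Ω : Type*} {Z : ℕ → Ω → ℝ}

def negFrom (n : ℕ) (Z : ℕ → Ω → ℝ) (k : ℕ) (ω : Ω) : ℝ := if k < n then Z k ω else -Z k ω

lemma negFrom_of_lt {n k : ℕ} (h : k < n) : negFrom n Z k = Z k :=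
  funext fun _ => if_pos h

lemma negFrom_of_le {n k : ℕ} (h : n ≤ k) : negFrom n Z k = fun ω => -Z k ω :=
  funext fun _ => if_neg h.not_gt

lemma partialSum_negFrom_of_le {n m : ℕ} (h : m ≤ n) :
    partialSum (negFrom n Z) m = partialSum Z m := by
  funext ω
  refine Finset.sum_congr rfl fun k hk => ?_
  rw [negFrom_of_lt ((Finset.mem_range.1 hk).trans_le h)]

lemma partialSum_negFrom_of_ge {n N : ℕ} (h : n ≤ N) (ω : Ω) :
    partialSum (negFrom n Z) N ω = 2 * partialSum Z n ω - partialSum Z N ω := by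
  have hsplit := Finset.sum_range_add_sum_Ico (fun k => Z k ω) h
  have hneg : ∑ k ∈ Finset.Ico n N, negFrom n Z k ω = -∑ k ∈ Finset.Ico n N, Z k ω := by
    rw [← Finset.sum_neg_distrib]
    refine Finset.sum_congr rfl fun k hk => ?_
    rw [negFrom_of_le (Finset.mem_Ico.1 hk).1]
  have hinit := congrFun (partialSum_negFrom_of_le (Z := Z) (le_refl n)) ω
  simp only [partialSum] at hsplit hinit ⊢
  rw [← Finset.sum_range_add_sum_Ico _ h, hneg, hinit]
  linarith

end

variable {Ω : Type*} [MeasurableSpace Ω] {μ : Measure Ω} {Z : ℕ → Ω → ℝ}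

def exceedSet (Z : ℕ → Ω → ℝ) (a : ℝ) (m : ℕ) : Set Ω := {ω | a ≤ |partialSum Z m ω|}

lemma measurable_partialSum (hZ : ∀ k, Measurable (Z k)) (m : ℕ) :
    Measurable (partialSum Z m) :=
  Finset.measurable_sum _ fun k _ => hZ k

lemma measurableSet_exceedSet (hZ : ∀ k, Measurable (Z k)) (a : ℝ) (m : ℕ) :
    MeasurableSet (exceedSet Z a m) :=
  measurableSet_le measurable_const (measurable_partialSum hZ m).abs

lemma measurable_negFrom (hZ : ∀ k, Measurable (Z k)) (n k : ℕ) : Measurable (negFrom n Z k) := by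
  rcases lt_or_ge k n with hk | hk
  · rw [negFrom_of_lt hk]
    exact hZ k
  · rw [negFrom_of_le hk]
    exact (hZ k).neg

lemma iIndepFun.negFrom (h : iIndepFun Z μ) (n : ℕ) : iIndepFun (negFrom n Z) μ :=
  h.comp (fun k t => if k < n then t else -t) fun k => by
    by_cases hk : k < n <;> simp [hk, measurable_id', measurable_neg]

lemma identDistrib_negFrom (hZ : ∀ k, Measurable (Z k)) (hind : iIndepFun Z μ)
    (hsymm : ∀ k, μ.map (fun ω => -Z k ω) = μ.map (Z k)) (n : ℕ) :
    IdentDistrib (fun ω k => negFrom n Z k ω) (fun ω k => Z k ω) μ μ where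
  aemeasurable_fst := (measurable_pi_lambda _ (measurable_negFrom hZ n)).aemeasurable
  aemeasurable_snd := (measurable_pi_lambda _ hZ).aemeasurable
  map_eq := by
    rw [(hind.negFrom n).map_fun_eq_infinitePi_map (measurable_negFrom hZ n),
      hind.map_fun_eq_infinitePi_map hZ]
    congr 1
    funext k
    rcases lt_or_ge k n with hk | hk
    · rw [negFrom_of_lt hk]
    · rw [negFrom_of_le hk, hsymm k]

lemma measure_disjointed_inter_reflect_eq (hZ : ∀ k, Measurable (Z k)) (hind : iIndepFun Z μ)
    (hsymm : ∀ k, μ.map (fun ω => -Z k ω) = μ.map (Z k)) (a : ℝ) {n N : ℕ} (h : n ≤ N) :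
    μ (disjointed (exceedSet Z a) n ∩ {ω | a ≤ |2 * partialSum Z n ω - partialSum Z N ω|}) =
      μ (disjointed (exceedSet Z a) n ∩ exceedSet Z a N) := by
  set coord : ℕ → (ℕ → ℝ) → ℝ := fun k x => x k
  have hcoord : ∀ k, Measurable (coord k) := measurable_pi_apply
  have hs : MeasurableSet (disjointed (exceedSet coord a) n ∩ exceedSet coord a N) :=
    (MeasurableSet.disjointed (measurableSet_exceedSet hcoord a) n).inter
      (measurableSet_exceedSet hcoord a N)
  have hpre : ∀ W : ℕ → Ω → ℝ, (fun ω k => W k ω) ⁻¹'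
      (disjointed (exceedSet coord a) n ∩ exceedSet coord a N) =
      disjointed (exceedSet W a) n ∩ exceedSet W a N := fun W => by
    rw [Set.preimage_inter, Set.preimage_disjointed]
    rfl
  have hflip : disjointed (exceedSet Z a) n ∩
      {ω | a ≤ |2 * partialSum Z n ω - partialSum Z N ω|} =
      disjointed (exceedSet (negFrom n Z) a) n ∩ exceedSet (negFrom n Z) a N := by
    have hinit : ∀ m ≤ n, exceedSet Z a m = exceedSet (negFrom n Z) a m := fun m hm => by
      simp only [exceedSet, partialSum_negFrom_of_le hm]
    simp only [disjointed_congr hinit, exceedSet, partialSum_negFrom_of_ge h]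
  rw [hflip, ← hpre, ← hpre, (identDistrib_negFrom hZ hind hsymm n).measure_mem_eq hs]

theorem measure_exists_le_abs_partialSum_le (hZ : ∀ k, Measurable (Z k)) (hind : iIndepFun Z μ)
    (hsymm : ∀ k, μ.map (fun ω => -Z k ω) = μ.map (Z k)) (a : ℝ) (N : ℕ) :
    μ {ω | ∃ n ≤ N, a ≤ |partialSum Z n ω|} ≤ 2 * μ (exceedSet Z a N) := by
  set D := disjointed (exceedSet Z a)
  set A := exceedSet Z a N
  have hunion : {ω | ∃ n ≤ N, a ≤ |partialSum Z n ω|} = ⋃ n ∈ Finset.range (N + 1), D n := by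
    rw [biUnion_range_succ_disjointed, partialSups_eq_biSup]
    ext ω
    simp [exceedSet]
  have hdisj : Set.PairwiseDisjoint (↑(Finset.range (N + 1))) D :=
    (disjoint_disjointed _).set_pairwise _
  have hDm : ∀ n, MeasurableSet (D n) := MeasurableSet.disjointed (measurableSet_exceedSet hZ a)
  have hAm : MeasurableSet A := measurableSet_exceedSet hZ a N
  have hstep : ∀ n ≤ N, μ (D n) ≤ 2 * μ (D n ∩ A) := fun n hn => by
    have hcover : D n ⊆ (D n ∩ A) ∪
        (D n ∩ {ω | a ≤ |2 * partialSum Z n ω - partialSum Z N ω|}) := fun ω hω =>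
      (le_abs_or_le_abs_two_mul_sub (disjointed_subset _ n hω)).imp (⟨hω, ·⟩) (⟨hω, ·⟩)
    calc μ (D n) ≤ μ (D n ∩ A) +
          μ (D n ∩ {ω | a ≤ |2 * partialSum Z n ω - partialSum Z N ω|}) :=
          (measure_mono hcover).trans (measure_union_le _ _)
      _ = 2 * μ (D n ∩ A) := by
          rw [measure_disjointed_inter_reflect_eq hZ hind hsymm a hn, two_mul]
  calc μ {ω | ∃ n ≤ N, a ≤ |partialSum Z n ω|}
      = ∑ n ∈ Finset.range (N + 1), μ (D n) := by
        rw [hunion, measure_biUnion_finset hdisj fun n _ => hDm n]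
    _ ≤ ∑ n ∈ Finset.range (N + 1), 2 * μ (D n ∩ A) :=
        Finset.sum_le_sum fun n hn => hstep n (Nat.lt_succ_iff.1 (Finset.mem_range.1 hn))
    _ = 2 * μ (⋃ n ∈ Finset.range (N + 1), D n ∩ A) := by
        rw [measure_biUnion_finset (hdisj.mono fun n => Set.inter_subset_left)
          fun n _ => (hDm n).inter hAm, Finset.mul_sum]
    _ ≤ 2 * μ A := by
        gcongr
        exact Set.iUnion₂_subset fun n _ => Set.inter_subset_right

end ProbabilityTheory

theorem stmt14_general {Ω : Type*} [MeasurableSpace Ω] (μ : Measure Ω)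
    (X : Ω → ℝ) (Xs : ℕ → Ω → ℝ)
    (hXs : ∀ n, Measurable (Xs n))
    (hindep : iIndepFun Xs μ)
    (hident : ∀ n, IdentDistrib (Xs n) X μ μ)
    (hsymm : Measure.map X μ = Measure.map (fun ω => -X ω) μ) :
    ∀ i : ℕ,
      μ {ω | ∃ n : ℕ, 2 ^ i ≤ n ∧ n < 2 ^ (i + 1) ∧
          ((2 : ℝ) ^ i ≤ |partialSum Xs n ω|)} ≤
        3 * μ {ω | (2 : ℝ) ^ i / 2 ≤ |partialSum Xs (2 ^ (i + 1)) ω|} := by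
  intro i
  have hsymm' : ∀ k, μ.map (fun ω => -Xs k ω) = μ.map (Xs k) := fun k =>
    ((hident k).comp measurable_neg).map_eq.trans (hsymm.symm.trans (hident k).map_eq.symm)
  calc μ {ω | ∃ n : ℕ, 2 ^ i ≤ n ∧ n < 2 ^ (i + 1) ∧ ((2 : ℝ) ^ i ≤ |partialSum Xs n ω|)}
      ≤ μ {ω | ∃ n ≤ 2 ^ (i + 1), (2 : ℝ) ^ i ≤ |partialSum Xs n ω|} :=
        measure_mono fun ω ⟨n, _, hn, hle⟩ => ⟨n, hn.le, hle⟩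
    _ ≤ 2 * μ (exceedSet Xs (2 ^ i) (2 ^ (i + 1))) :=
        measure_exists_le_abs_partialSum_le hXs hindep hsymm' _ _
    _ ≤ 3 * μ {ω | (2 : ℝ) ^ i / 2 ≤ |partialSum Xs (2 ^ (i + 1)) ω|} := by
        gcongr
        · norm_num
        · exact fun ω hω => (half_le_self (by positivity : (0 : ℝ) ≤ 2 ^ i)).trans hω

theorem stmt14 {Ω : Type*} [MeasurableSpace Ω] (μ : Measure Ω) [IsProbabilityMeasure μ]
    (X : Ω → ℝ) (Xs : ℕ → Ω → ℝ)
    (hX : Measurable X) (hXs : ∀ n, Measurable (Xs n))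
    (hindep : iIndepFun Xs μ)
    (hident : ∀ n, IdentDistrib (Xs n) X μ μ)
    (hsymm : Measure.map X μ = Measure.map (fun ω => -X ω) μ) :
    ∀ i : ℕ,
      μ {ω | ∃ n : ℕ, 2 ^ i ≤ n ∧ n < 2 ^ (i + 1) ∧
          ((2 : ℝ) ^ i ≤ |partialSum Xs n ω|)} ≤
        3 * μ {ω | (2 : ℝ) ^ i / 2 ≤ |partialSum Xs (2 ^ (i + 1)) ω|} :=
  stmt14_general μ X Xs hXs hindep hident hsymm
end
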